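/- arXiv:0904.2471 — 5 statements merged into one kernel-verified Lean document; each statement's English description precedes it below -/
import Mathlib

section
/- For every m ∈ (0,1], the function u : (−∞,0] → (0,1] defined by u(s) = h⁻¹(h(m)e^{s}) is differentiable and satisfies u'(s) = V(u(s)) for all s ≤ 0, together with u(0) = m. In other words, the backward flow of the ODE du/ds = V(u) through m at time 0 is given explicitly by π_s(m) = h⁻¹(h(m)e^{s}) for s ≤ 0. -/
/-!
On `(0, 1]` we have `log h = -∫_·^1 1/V`, so `h' = h / V` there (one-sided at `1`). Since `h⁻¹` is a
monotone surjection of `[0, 1]` onto itself it is continuous, and the inverse function rule gives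
`(h⁻¹)'(x) = V (h⁻¹ x) / x` within `(0, 1]`. The chain rule through `s ↦ h m * exp s`, which maps
`(-∞, 0]` into `(0, 1]`, then yields `u' = V (h⁻¹ x) / x * x = V u`.
-/

open Set Filter Topology

theorem StrictMonoOn.strictMonoOn_of_rightInvOn {α β : Type*} [LinearOrder α] [Preorder β]
    {f : α → β} {g : β → α} {s : Set α} {t : Set β} (hf : StrictMonoOn f s) (hg : MapsTo g t s)
    (hfg : RightInvOn g f t) : StrictMonoOn g t := by
  intro x hx y hy hxy
  by_contra! hle
  have := hf.monotoneOn (hg hy) (hg hx) hle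
  rw [hfg hx, hfg hy] at this
  exact hxy.not_ge this

theorem MonotoneOn.continuousOn_of_surjOn {α β : Type*} [LinearOrder α] [TopologicalSpace α]
    [OrderTopology α] [LinearOrder β] [TopologicalSpace β] [OrderTopology β] [DenselyOrdered β]
    {f : α → β} {s : Set α} {t : Set β} [s.OrdConnected] [t.OrdConnected]
    (hf : MonotoneOn f s) (hmaps : MapsTo f s t) (hsurj : SurjOn f s t) : ContinuousOn f s := by
  rw [continuousOn_iff_continuous_domRestrict]
  have hcont : Continuous hmaps.restrict :=
    Monotone.continuous_of_surjective (fun x y hxy => hf x.2 y.2 hxy)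
      (hmaps.restrict_surjective_iff.mpr hsurj)
  exact continuous_subtype_val.comp hcont

theorem hasDerivWithinAt_integral_Ioc_left {E : Type*} [NormedAddCommGroup E] [NormedSpace ℝ E]
    [CompleteSpace E] {f : ℝ → E} {a b x : ℝ} (hf : ContinuousOn f (Ioc a b)) (hx : x ∈ Ioc a b) :
    HasDerivWithinAt (fun u => ∫ t in u..b, f t) (-f x) (Ioc a b) x := by
  obtain ⟨c, hac, hcx⟩ := exists_between hx.1
  have hsub : Icc c b ⊆ Ioc a b := Icc_subset_Ioc_iff (hcx.le.trans hx.2) |>.mpr ⟨hac, le_rfl⟩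
  have hfc : ContinuousOn f (Icc c b) := hf.mono hsub
  have : Fact (x ∈ Icc c b) := ⟨⟨hcx.le, hx.2⟩⟩
  have hderiv : HasDerivWithinAt (fun u => ∫ t in u..b, f t) (-f x) (Icc c b) x :=
    intervalIntegral.integral_hasDerivWithinAt_left
      ((hfc.mono (Icc_subset_Icc hcx.le le_rfl)).intervalIntegrable_of_Icc hx.2)
      (hfc.stronglyMeasurableAtFilter_nhdsWithin measurableSet_Icc x)
      (hfc.continuousWithinAt ⟨hcx.le, hx.2⟩)
  refine hderiv.mono_of_mem_nhdsWithin ?_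
  exact mem_of_superset (inter_mem_nhdsWithin _ (Ioi_mem_nhds hcx))
    fun y hy => ⟨hy.2.le, hy.1.2⟩

theorem HasDerivWithinAt.of_local_left_inverse {𝕜 : Type*} [NontriviallyNormedField 𝕜]
    {f g : 𝕜 → 𝕜} {f' a : 𝕜} {s t : Set 𝕜} (hg : Tendsto g (𝓝[s] a) (𝓝[t] (g a)))
    (hf : HasDerivWithinAt f f' t (g a)) (hf' : f' ≠ 0) (ha : a ∈ s)
    (hfg : ∀ᶠ y in 𝓝[s] a, f (g y) = y) : HasDerivWithinAt g f'⁻¹ s a :=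
  HasFDerivWithinAt.of_local_left_inverse
    (f' := ContinuousLinearEquiv.unitsEquivAut 𝕜 (Units.mk0 f' hf')) hg hf ha hfg

theorem hasDerivWithinAt_exp_neg_integral_inv {V : ℝ → ℝ} {a b x : ℝ}
    (hV : ContinuousOn V (Ioc a b)) (hV0 : ∀ y ∈ Ioc a b, V y ≠ 0) (hx : x ∈ Ioc a b) :
    HasDerivWithinAt (fun y => Real.exp (-∫ s in y..b, (V s)⁻¹))
      (Real.exp (-∫ s in x..b, (V s)⁻¹) / V x) (Ioc a b) x := by
  simpa [div_eq_mul_inv] using (hasDerivWithinAt_integral_Ioc_left (hV.inv₀ hV0) hx).neg.exp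

theorem hasDerivWithinAt_inverse_exp_neg_integral_inv {V h g : ℝ → ℝ} {a b x : ℝ}
    (hV : ContinuousOn V (Ioc a b)) (hV0 : ∀ y ∈ Ioc a b, V y ≠ 0)
    (hh : EqOn h (fun y => Real.exp (-∫ s in y..b, (V s)⁻¹)) (Ioc a b))
    (hg : ContinuousOn g (Ioc a b)) (hg_maps : MapsTo g (Ioc a b) (Ioc a b))
    (hhg : RightInvOn g h (Ioc a b)) (hx : x ∈ Ioc a b) :
    HasDerivWithinAt g (V (g x) / x) (Ioc a b) x := by
  have hgx := hg_maps hx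
  have hhx : Real.exp (-∫ s in g x..b, (V s)⁻¹) = x := (hh hgx).symm.trans (hhg hx)
  have hderiv := (hasDerivWithinAt_exp_neg_integral_inv hV hV0 hgx).congr hh (hh hgx)
  rw [hhx] at hderiv
  have hx0 : 0 < x := hhx ▸ Real.exp_pos _
  simpa using hderiv.of_local_left_inverse ((hg x hx).tendsto_nhdsWithin hg_maps)
    (div_ne_zero hx0.ne' (hV0 _ hgx)) hx (eventually_nhdsWithin_of_forall hhg)

theorem stmt_1_general
    (V : ℝ → ℝ)
    (hV : ContDiffOn ℝ 1 V (Set.Icc 0 1))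
    (hVpos : ∀ m ∈ Set.Ioc (0:ℝ) 1, 0 < V m)
    (h hinv : ℝ → ℝ)
    (hHdef : ∀ m ∈ Set.Ioc (0:ℝ) 1, h m = Real.exp (-∫ s in m..1, (V s)⁻¹))
    (hH0 : h 0 = 0)
    (hHmono : StrictMonoOn h (Set.Icc 0 1))
    (hinvH : ∀ m ∈ Set.Icc (0:ℝ) 1, hinv (h m) = m)
    (hHinv : ∀ x ∈ Set.Icc (0:ℝ) 1, h (hinv x) = x)
    (hinvMaps : Set.MapsTo hinv (Set.Icc 0 1) (Set.Icc 0 1))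
 :
    ∀ m ∈ Set.Ioc (0:ℝ) 1,
      (∀ s : ℝ, s ≤ 0 → hinv (h m * Real.exp s) ∈ Set.Ioc (0:ℝ) 1) ∧
      hinv (h m * Real.exp 0) = m ∧
      (∀ s : ℝ, s ≤ 0 →
        HasDerivWithinAt (fun s' : ℝ => hinv (h m * Real.exp s'))
          (V (hinv (h m * Real.exp s))) (Set.Iic 0) s) := by
  intro m hm
  have hh1 : h 1 = 1 := by simpa using hHdef 1 (right_mem_Ioc.2 one_pos)
  have hh_Icc : MapsTo h (Icc 0 1) (Icc 0 1) := by
    simpa [hH0, hh1] using hHmono.monotoneOn.mapsTo_Icc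
  have hinv_cont : ContinuousOn hinv (Icc 0 1) :=
    (hHmono.strictMonoOn_of_rightInvOn hinvMaps hHinv).monotoneOn.continuousOn_of_surjOn
      hinvMaps (LeftInvOn.surjOn hinvH hh_Icc)
  have hinv_Ioc : MapsTo hinv (Ioc 0 1) (Ioc 0 1) := fun x hx => by
    obtain ⟨hinv_nonneg, hinv_le⟩ := hinvMaps (Ioc_subset_Icc_self hx)
    refine ⟨hinv_nonneg.lt_of_ne fun h0 => hx.1.ne ?_, hinv_le⟩
    rw [← hHinv x (Ioc_subset_Icc_self hx), ← h0, hH0]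
  have hhm : 0 < h m := hH0 ▸ hHmono (left_mem_Icc.2 zero_le_one) (Ioc_subset_Icc_self hm) hm.1
  have hflow : MapsTo (fun s => h m * Real.exp s) (Iic 0) (Ioc 0 1) := fun s hs =>
    ⟨by positivity, (mul_le_of_le_one_right hhm.le (Real.exp_le_one_iff.2 hs)).trans
      (hh_Icc (Ioc_subset_Icc_self hm)).2⟩
  refine ⟨fun s hs => hinv_Ioc (hflow hs), by simpa using hinvH m (Ioc_subset_Icc_self hm),
    fun s hs => ?_⟩
  have hderiv : HasDerivWithinAt (fun s' => hinv (h m * Real.exp s'))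
      (V (hinv (h m * Real.exp s)) / (h m * Real.exp s) * (h m * Real.exp s)) (Iic 0) s :=
    (hasDerivWithinAt_inverse_exp_neg_integral_inv
      (hV.continuousOn.mono Ioc_subset_Icc_self) (fun y hy => (hVpos y hy).ne') hHdef
      (hinv_cont.mono Ioc_subset_Icc_self) hinv_Ioc (fun x hx => hHinv x (Ioc_subset_Icc_self hx))
      (hflow hs)).comp s ((Real.hasDerivAt_exp s).const_mul (h m)).hasDerivWithinAt hflow
  rwa [div_mul_cancel₀ _ (hflow hs).1.ne'] at hderiv

theorem stmt_1
    (V : ℝ → ℝ)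
    (hV : ContDiffOn ℝ 1 V (Set.Icc 0 1))
    (hV0 : V 0 = 0)
    (hVpos : ∀ m ∈ Set.Ioc (0:ℝ) 1, 0 < V m)
    (hVdiv : ∀ m ∈ Set.Ioc (0:ℝ) 1,
      ¬ IntervalIntegrable (fun s => (V s)⁻¹) MeasureTheory.volume 0 m)
    (h hinv : ℝ → ℝ)
    (hHdef : ∀ m ∈ Set.Ioc (0:ℝ) 1, h m = Real.exp (-∫ s in m..1, (V s)⁻¹))
    (hH0 : h 0 = 0)
    (hHcont : ContinuousOn h (Set.Icc 0 1))
    (hHmono : StrictMonoOn h (Set.Icc 0 1))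
    (hHbij : Set.BijOn h (Set.Icc 0 1) (Set.Icc 0 1))
    (hinvH : ∀ m ∈ Set.Icc (0:ℝ) 1, hinv (h m) = m)
    (hHinv : ∀ x ∈ Set.Icc (0:ℝ) 1, h (hinv x) = x)
    (hinvMaps : Set.MapsTo hinv (Set.Icc 0 1) (Set.Icc 0 1))
 :
    ∀ m ∈ Set.Ioc (0:ℝ) 1,
      (∀ s : ℝ, s ≤ 0 → hinv (h m * Real.exp s) ∈ Set.Ioc (0:ℝ) 1) ∧
      hinv (h m * Real.exp 0) = m ∧
      (∀ s : ℝ, s ≤ 0 →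
        HasDerivWithinAt (fun s' : ℝ => hinv (h m * Real.exp s'))
          (V (hinv (h m * Real.exp s))) (Set.Iic 0) s) :=
  stmt_1_general V hV hVpos h hinv hHdef hH0 hHmono hinvH hHinv hinvMaps
end

section
/- Let w : [0,g(1)] → ℝ be continuous and λ > 0. Then the function u : [0,g(1)] → ℝ defined by u(m) = (1/h_λ(m)) ∫_0^m w(s) h_λ(s)/(λ V(s)) ds for m ∈ (0,g(1)] and u(0) = w(0) is the unique bounded function on [0,g(1)] that is C¹ on (0,g(1)] and satisfies u(m) + λ V(m) u'(m) = w(m) for all m ∈ (0,g(1)] together with u(0) = w(0); moreover u is continuous on [0,g(1)] and sup_{0≤m≤g(1)} |u(m)| ≤ sup_{0≤m≤g(1)} |w(m)|. -/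
noncomputable def hlamF (V : ℝ → ℝ) (g1 lam m : ℝ) : ℝ :=
  if m = 0 then 0 else Real.exp (∫ s in g1..m, (lam * V s)⁻¹)

noncomputable def uF (V : ℝ → ℝ) (g1 lam : ℝ) (w : ℝ → ℝ) (m : ℝ) : ℝ :=
  if m = 0 then w 0
  else (hlamF V g1 lam m)⁻¹ * ∫ s in (0:ℝ)..m, w s * hlamF V g1 lam s / (lam * V s)

/-! Write `φ = 1 / (λ V)` and `h = h_λ = exp ∫_{g 1}^m φ`, so that `h' = h φ` and the equation
`u + λ V u' = w` becomes `(h u)' = w h'` on `(0, g 1]`. Since `∫_0 φ = ∞`, `h(0+) = 0`; hence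
`h'` is integrable at `0` with `∫_0^m h' = h m`, and `u m = h(m)⁻¹ ∫_0^m w h'` is an average of `w`
over `(0, m]` against a probability density. This gives the bound by `sup |w|` and `u(0+) = w 0`.
The difference `e` of two bounded solutions satisfies `(h e)' = 0` and `h e → 0` at `0`, so `e = 0`.
-/

open Set MeasureTheory Filter Topology intervalIntegral

theorem hasDerivWithinAt_integral_of_continuousOn_Ioc {f : ℝ → ℝ} {a b c m : ℝ}
    (hf : ContinuousOn f (Ioc a b)) (hfi : IntervalIntegrable f volume c m)
    (hm : m ∈ Ioc a b) :
    HasDerivWithinAt (fun x => ∫ s in c..x, f s) (f m) (Ioc a b) m := by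
  have hmeas : AEStronglyMeasurable f (volume.restrict (Ioc a b)) :=
    hf.aestronglyMeasurable measurableSet_Ioc
  rcases hm.2.lt_or_eq with hlt | rfl
  · have hnhds : Ioc a b ∈ 𝓝 m := mem_of_superset (Ioo_mem_nhds hm.1 hlt) Ioo_subset_Ioc_self
    exact (integral_hasDerivAt_right hfi ⟨_, hnhds, hmeas⟩
      (hf.continuousAt hnhds)).hasDerivWithinAt
  · have hnhds : Ioc a m ∈ 𝓝[Iic m] m :=
      mem_nhdsWithin.2 ⟨Ioi a, isOpen_Ioi, hm.1, fun y hy => ⟨hy.1, hy.2⟩⟩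
    exact (integral_hasDerivWithinAt_right (s := Iic m) (t := Iic m) hfi ⟨_, hnhds, hmeas⟩
      ((hf m hm).mono_of_mem_nhdsWithin hnhds)).mono Ioc_subset_Iic_self

theorem continuousOn_Icc_of_continuousOn_Ioc {f : ℝ → ℝ} {a b : ℝ}
    (hf : ContinuousOn f (Ioc a b)) (ha : Tendsto f (𝓝[>] a) (𝓝 (f a))) :
    ContinuousOn f (Icc a b) := by
  intro x hx
  rcases hx.1.eq_or_lt with rfl | hax
  · exact (continuousWithinAt_Ioi_iff_Ici.mp ha).mono Icc_subset_Ici_self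
  · exact (hf x ⟨hax, hx.2⟩).mono_of_mem_nhdsWithin
      (mem_nhdsWithin.2 ⟨Ioi a, isOpen_Ioi, hax, fun y hy => ⟨hy.1, hy.2.2⟩⟩)

theorem contDiffOn_one_of_hasDerivWithinAt {f f' : ℝ → ℝ} {s : Set ℝ} (hs : UniqueDiffOn ℝ s)
    (hf : ∀ x ∈ s, HasDerivWithinAt f (f' x) s x) (hf' : ContinuousOn f' s) :
    ContDiffOn ℝ 1 f s :=
  (contDiffOn_one_iff_derivWithin hs).2 ⟨fun x hx => (hf x hx).differentiableWithinAt,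
    hf'.congr fun x hx => (hf x hx).derivWithin (hs x hx)⟩

theorem intervalIntegrable_of_continuousOn_Ioc {f : ℝ → ℝ} {a b x y : ℝ}
    (hf : ContinuousOn f (Ioc a b)) (hx : x ∈ Ioc a b) (hy : y ∈ Ioc a b) :
    IntervalIntegrable f volume x y :=
  (hf.mono (ordConnected_Ioc.uIcc_subset hx hy)).intervalIntegrable

theorem lt_of_not_integrableOn_Ioc {f : ℝ → ℝ} {a b : ℝ} (hf : ¬ IntegrableOn f (Ioc a b)) :
    a < b := by
  by_contra! hab
  exact hf (by simp [Ioc_eq_empty_of_le hab])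

theorem add_mul_eq_iff_eq_inv_mul_sub {a u d w : ℝ} (ha : a ≠ 0) :
    u + a * d = w ↔ d = a⁻¹ * (w - u) := by
  rw [eq_inv_mul_iff_mul_eq₀ ha]
  constructor <;> intro h <;> linarith

theorem tendsto_div_add_one_nhds_zero (b : ℝ) :
    Tendsto (fun n : ℕ => b / (n + 1)) atTop (𝓝 0) := by
  simpa only [mul_one_div, mul_zero] using tendsto_one_div_add_atTop_nhds_zero_nat.const_mul b

namespace SingularLinearODE

noncomputable def integratingFactor (φ : ℝ → ℝ) (b m : ℝ) : ℝ :=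
  if m = 0 then 0 else Real.exp (∫ s in b..m, φ s)

variable {φ : ℝ → ℝ} {b : ℝ}

theorem integratingFactor_zero : integratingFactor φ b 0 = 0 := if_pos rfl

theorem integratingFactor_of_ne_zero {m : ℝ} (hm : m ≠ 0) :
    integratingFactor φ b m = Real.exp (∫ s in b..m, φ s) := if_neg hm

theorem integratingFactor_pos {m : ℝ} (hm : m ≠ 0) : 0 < integratingFactor φ b m := by
  rw [integratingFactor_of_ne_zero hm]
  exact Real.exp_pos _

theorem integratingFactor_nonneg (m : ℝ) : 0 ≤ integratingFactor φ b m := by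
  rcases eq_or_ne m 0 with rfl | hm
  · rw [integratingFactor_zero]
  · exact (integratingFactor_pos hm).le

theorem hasDerivWithinAt_integratingFactor (hφ : ContinuousOn φ (Ioc 0 b)) {m : ℝ}
    (hm : m ∈ Ioc 0 b) :
    HasDerivWithinAt (integratingFactor φ b) (integratingFactor φ b m * φ m) (Ioc 0 b) m := by
  have hb : b ∈ Ioc 0 b := ⟨hm.1.trans_le hm.2, le_rfl⟩
  have hexp := (hasDerivWithinAt_integral_of_continuousOn_Ioc hφ
    (intervalIntegrable_of_continuousOn_Ioc hφ hb hm) hm).exp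
  rw [← integratingFactor_of_ne_zero hm.1.ne'] at hexp
  exact hexp.congr (fun x hx => integratingFactor_of_ne_zero hx.1.ne')
    (integratingFactor_of_ne_zero hm.1.ne')

theorem hasDerivAt_integratingFactor (hφ : ContinuousOn φ (Ioc 0 b)) {m : ℝ}
    (hm : m ∈ Ioo 0 b) :
    HasDerivAt (integratingFactor φ b) (integratingFactor φ b m * φ m) m :=
  (hasDerivWithinAt_integratingFactor hφ (Ioo_subset_Ioc_self hm)).hasDerivAt
    (mem_of_superset (Ioo_mem_nhds hm.1 hm.2) Ioo_subset_Ioc_self)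

theorem integrableOn_of_integral_le (hφ : ContinuousOn φ (Ioc 0 b))
    (hφpos : ∀ s ∈ Ioc 0 b, 0 < φ s) {C : ℝ} (hC : ∀ ε ∈ Ioc 0 b, ∫ s in ε..b, φ s ≤ C) :
    IntegrableOn φ (Ioc 0 b) := by
  rcases le_or_gt b 0 with hb | hb
  · simp [Ioc_eq_empty_of_le hb]
  have hmem (n : ℕ) : b / (n + 1) ∈ Ioc 0 b :=
    ⟨by positivity, div_le_self hb.le (by linarith [n.cast_nonneg (α := ℝ)])⟩
  refine integrableOn_Ioc_of_intervalIntegral_norm_bounded_left (I := C)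
    (fun n => (intervalIntegrable_of_continuousOn_Ioc hφ (hmem n) ⟨hb, le_rfl⟩).1)
    (tendsto_div_add_one_nhds_zero b) (Eventually.of_forall fun n => ?_)
  rw [← integral_of_le (hmem n).2]
  refine le_trans (le_of_eq ?_) (hC _ (hmem n))
  refine integral_congr fun s hs => Real.norm_of_nonneg (hφpos s ?_).le
  exact ordConnected_Ioc.uIcc_subset (hmem n) ⟨hb, le_rfl⟩ hs

noncomputable def solution (φ : ℝ → ℝ) (b : ℝ) (w : ℝ → ℝ) (m : ℝ) : ℝ :=
  if m = 0 then w 0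
  else (integratingFactor φ b m)⁻¹ * ∫ s in 0..m, w s * (integratingFactor φ b s * φ s)

variable {w : ℝ → ℝ}

theorem solution_zero : solution φ b w 0 = w 0 := if_pos rfl

theorem solution_of_ne_zero {m : ℝ} (hm : m ≠ 0) :
    solution φ b w m =
      (integratingFactor φ b m)⁻¹ * ∫ s in 0..m, w s * (integratingFactor φ b s * φ s) :=
  if_neg hm

section Divergent

variable (hφ : ContinuousOn φ (Ioc 0 b)) (hφpos : ∀ s ∈ Ioc 0 b, 0 < φ s)
  (hφdiv : ¬ IntegrableOn φ (Ioc 0 b))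
include hφ hφpos hφdiv

theorem tendsto_integral_atTop :
    Tendsto (fun ε => ∫ s in ε..b, φ s) (𝓝[>] 0) atTop := by
  refine tendsto_atTop.2 fun C => ?_
  obtain ⟨δ, hδ, hCδ⟩ : ∃ δ ∈ Ioc 0 b, C ≤ ∫ s in δ..b, φ s := by
    by_contra! h
    exact hφdiv (integrableOn_of_integral_le hφ hφpos fun ε hε => (h ε hε).le)
  have hb : b ∈ Ioc 0 b := ⟨hδ.1.trans_le hδ.2, le_rfl⟩
  filter_upwards [Ioo_mem_nhdsGT hδ.1] with ε hε
  have hεb : ε ∈ Ioc 0 b := ⟨hε.1, hε.2.le.trans hδ.2⟩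
  refine hCδ.trans (integral_mono_interval hε.2.le hδ.2 le_rfl ?_
    (intervalIntegrable_of_continuousOn_Ioc hφ hεb hb))
  exact (ae_restrict_iff' measurableSet_Ioc).2
    (Eventually.of_forall fun s hs => (hφpos s ⟨hε.1.trans hs.1, hs.2⟩).le)

theorem tendsto_integratingFactor_zero :
    Tendsto (integratingFactor φ b) (𝓝[>] 0) (𝓝 0) := by
  refine (Real.tendsto_exp_atBot.comp
    (tendsto_neg_atTop_atBot.comp (tendsto_integral_atTop hφ hφpos hφdiv))).congr' ?_
  filter_upwards [self_mem_nhdsWithin] with ε (hε : 0 < ε)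
  rw [Function.comp_apply, Function.comp_apply, integratingFactor_of_ne_zero hε.ne',
    integral_symm, neg_neg]

theorem continuousOn_integratingFactor : ContinuousOn (integratingFactor φ b) (Icc 0 b) := by
  refine continuousOn_Icc_of_continuousOn_Ioc
    (fun m hm => (hasDerivWithinAt_integratingFactor hφ hm).continuousWithinAt) ?_
  rw [integratingFactor_zero]
  exact tendsto_integratingFactor_zero hφ hφpos hφdiv

theorem intervalIntegrable_integratingFactor_mul {m : ℝ} (hm : m ∈ Icc 0 b) :
    IntervalIntegrable (fun s => integratingFactor φ b s * φ s) volume 0 m :=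
  (intervalIntegrable_iff_integrableOn_Ioc_of_le hm.1).2 <| integrableOn_deriv_of_nonneg
    ((continuousOn_integratingFactor hφ hφpos hφdiv).mono (Icc_subset_Icc_right hm.2))
    (fun _ hx => hasDerivAt_integratingFactor hφ ⟨hx.1, hx.2.trans_le hm.2⟩)
    fun x hx => mul_nonneg (integratingFactor_nonneg x) (hφpos x ⟨hx.1, hx.2.le.trans hm.2⟩).le

theorem integral_integratingFactor_mul {m : ℝ} (hm : m ∈ Icc 0 b) :
    ∫ s in 0..m, integratingFactor φ b s * φ s = integratingFactor φ b m := by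
  rw [integral_eq_sub_of_hasDerivAt_of_le hm.1
    ((continuousOn_integratingFactor hφ hφpos hφdiv).mono (Icc_subset_Icc_right hm.2))
    (fun x hx => hasDerivAt_integratingFactor hφ ⟨hx.1, hx.2.trans_le hm.2⟩)
    (intervalIntegrable_integratingFactor_mul hφ hφpos hφdiv hm), integratingFactor_zero,
    sub_zero]

theorem abs_inv_integratingFactor_mul_integral_le {f : ℝ → ℝ} {C m : ℝ} (hm : m ∈ Ioc 0 b)
    (hf : ∀ s ∈ Ioc 0 m, |f s| ≤ C) :
    |(integratingFactor φ b m)⁻¹ * ∫ s in 0..m, f s * (integratingFactor φ b s * φ s)| ≤ C := by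
  have hm' := Ioc_subset_Icc_self hm
  have hpos := integratingFactor_pos (φ := φ) (b := b) hm.1.ne'
  have hbound : ‖∫ s in 0..m, f s * (integratingFactor φ b s * φ s)‖
      ≤ ∫ s in 0..m, C * (integratingFactor φ b s * φ s) := by
    refine norm_integral_le_of_norm_le hm.1.le (Eventually.of_forall fun s hs => ?_)
      ((intervalIntegrable_integratingFactor_mul hφ hφpos hφdiv hm').const_mul C)
    have hψ : 0 ≤ integratingFactor φ b s * φ s :=
      mul_nonneg (integratingFactor_nonneg s) (hφpos s ⟨hs.1, hs.2.trans hm.2⟩).le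
    rw [Real.norm_eq_abs, abs_mul, abs_of_nonneg hψ]
    exact mul_le_mul_of_nonneg_right (hf s hs) hψ
  rw [intervalIntegral.integral_const_mul, integral_integratingFactor_mul hφ hφpos hφdiv hm',
    Real.norm_eq_abs] at hbound
  rw [abs_mul, abs_of_pos (inv_pos.2 hpos), inv_mul_le_iff₀ hpos, mul_comm]
  exact hbound

theorem abs_solution_le {C : ℝ} (hC : ∀ s ∈ Icc 0 b, |w s| ≤ C) {m : ℝ} (hm : m ∈ Icc 0 b) :
    |solution φ b w m| ≤ C := by
  rcases hm.1.eq_or_lt with rfl | hm0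
  · rw [solution_zero]
    exact hC 0 hm
  · rw [solution_of_ne_zero hm0.ne']
    exact abs_inv_integratingFactor_mul_integral_le hφ hφpos hφdiv ⟨hm0, hm.2⟩
      fun s hs => hC s ⟨hs.1.le, hs.2.trans hm.2⟩

theorem intervalIntegrable_mul_integratingFactor_mul (hw : ContinuousOn w (Icc 0 b)) {m : ℝ}
    (hm : m ∈ Icc 0 b) :
    IntervalIntegrable (fun s => w s * (integratingFactor φ b s * φ s)) volume 0 m :=
  (intervalIntegrable_integratingFactor_mul hφ hφpos hφdiv hm).continuousOn_mul
    (hw.mono (by rw [uIcc_of_le hm.1]; exact Icc_subset_Icc_right hm.2))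

theorem hasDerivWithinAt_solution (hw : ContinuousOn w (Icc 0 b)) {m : ℝ} (hm : m ∈ Ioc 0 b) :
    HasDerivWithinAt (solution φ b w) (φ m * (w m - solution φ b w m)) (Ioc 0 b) m := by
  have hcont : ContinuousOn (fun s => w s * (integratingFactor φ b s * φ s)) (Ioc 0 b) :=
    (hw.mono Ioc_subset_Icc_self).mul
      (((continuousOn_integratingFactor hφ hφpos hφdiv).mono Ioc_subset_Icc_self).mul hφ)
  have hG := hasDerivWithinAt_integral_of_continuousOn_Ioc hcont
    (intervalIntegrable_mul_integratingFactor_mul hφ hφpos hφdiv hw (Ioc_subset_Icc_self hm)) hm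
  have hne := (integratingFactor_pos (φ := φ) (b := b) hm.1.ne').ne'
  refine (((hasDerivWithinAt_integratingFactor hφ hm).inv hne).mul hG).congr
    (fun x hx => solution_of_ne_zero hx.1.ne') (solution_of_ne_zero hm.1.ne') |>.congr_deriv ?_
  rw [solution_of_ne_zero hm.1.ne', Pi.inv_apply]
  field_simp
  ring

theorem solution_sub_eq (hw : ContinuousOn w (Icc 0 b)) {m : ℝ} (hm : m ∈ Ioc 0 b) :
    solution φ b w m - w 0 = (integratingFactor φ b m)⁻¹ *
      ∫ s in 0..m, (w s - w 0) * (integratingFactor φ b s * φ s) := by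
  have hm' := Ioc_subset_Icc_self hm
  have hne := (integratingFactor_pos (φ := φ) (b := b) hm.1.ne').ne'
  simp only [sub_mul]
  rw [integral_sub (intervalIntegrable_mul_integratingFactor_mul hφ hφpos hφdiv hw hm')
    ((intervalIntegrable_integratingFactor_mul hφ hφpos hφdiv hm').const_mul (w 0)),
    intervalIntegral.integral_const_mul, integral_integratingFactor_mul hφ hφpos hφdiv hm',
    solution_of_ne_zero hm.1.ne', mul_sub, mul_comm (w 0), inv_mul_cancel_left₀ hne]

theorem tendsto_solution_zero (hw : ContinuousOn w (Icc 0 b)) :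
    Tendsto (solution φ b w) (𝓝[>] 0) (𝓝 (w 0)) := by
  have hb : 0 < b := lt_of_not_integrableOn_Ioc hφdiv
  rw [Metric.tendsto_nhdsWithin_nhds]
  intro ε hε
  obtain ⟨δ, hδ, hwδ⟩ := Metric.continuousWithinAt_iff.1 (hw 0 ⟨le_rfl, hb.le⟩) (ε / 2)
    (half_pos hε)
  refine ⟨min δ b, lt_min hδ hb, fun x (hx : 0 < x) hxδ => ?_⟩
  rw [Real.dist_eq, sub_zero, abs_of_pos hx, lt_min_iff] at hxδ
  have hxb : x ∈ Ioc 0 b := ⟨hx, hxδ.2.le⟩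
  rw [Real.dist_eq, solution_sub_eq hφ hφpos hφdiv hw hxb]
  refine (abs_inv_integratingFactor_mul_integral_le hφ hφpos hφdiv hxb fun s hs => ?_).trans_lt
    (half_lt_self hε)
  rw [← Real.dist_eq]
  refine (hwδ ⟨hs.1.le, hs.2.trans hxb.2⟩ ?_).le
  rw [Real.dist_eq, sub_zero, abs_of_pos hs.1]
  exact hs.2.trans_lt hxδ.1

theorem continuousOn_solution (hw : ContinuousOn w (Icc 0 b)) :
    ContinuousOn (solution φ b w) (Icc 0 b) := by
  refine continuousOn_Icc_of_continuousOn_Ioc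
    (fun m hm => (hasDerivWithinAt_solution hφ hφpos hφdiv hw hm).continuousWithinAt) ?_
  rw [solution_zero]
  exact tendsto_solution_zero hφ hφpos hφdiv hw

theorem eq_zero_of_hasDerivWithinAt_eq_neg_mul {e : ℝ → ℝ}
    (hbdd : ∃ M, ∀ m ∈ Ioc 0 b, |e m| ≤ M)
    (he : ∀ m ∈ Ioc 0 b, HasDerivWithinAt e (-(φ m * e m)) (Ioc 0 b) m) {m : ℝ}
    (hm : m ∈ Ioc 0 b) : e m = 0 := by
  obtain ⟨M, hM⟩ := hbdd
  set D := fun x => integratingFactor φ b x * e x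
  have hD : ∀ x ∈ Ioc 0 b, HasDerivWithinAt D 0 (Ioc 0 b) x := fun x hx =>
    ((hasDerivWithinAt_integratingFactor hφ hx).mul (he x hx)).congr_deriv (by ring)
  have hconst : ∀ x ∈ Ioc 0 b, D x = D m := fun x hx => by
    have := (convex_Ioc 0 b).norm_image_sub_le_of_norm_hasDerivWithin_le hD
      (fun _ _ => norm_zero.le) hm hx
    rwa [zero_mul, norm_le_zero_iff, sub_eq_zero] at this
  have hnhds : Ioc 0 b ∈ 𝓝[>] 0 := Ioc_mem_nhdsGT (hm.1.trans_le hm.2)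
  have hlim : Tendsto D (𝓝[>] 0) (𝓝 0) :=
    (tendsto_integratingFactor_zero hφ hφpos hφdiv).zero_mul_isBoundedUnder_le
      ⟨M, eventually_map.2 (mem_of_superset hnhds fun x hx => hM x hx)⟩
  have hDm : D m = 0 :=
    tendsto_nhds_unique (tendsto_const_nhds.congr' (mem_of_superset hnhds
      fun x hx => (hconst x hx).symm)) hlim
  exact (mul_eq_zero.1 hDm).resolve_left (integratingFactor_pos hm.1.ne').ne'

theorem contDiffOn_solution (hw : ContinuousOn w (Icc 0 b)) :
    ContDiffOn ℝ 1 (solution φ b w) (Ioc 0 b) :=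
  contDiffOn_one_of_hasDerivWithinAt (uniqueDiffOn_Ioc 0 b)
    (fun _ => hasDerivWithinAt_solution hφ hφpos hφdiv hw)
    (hφ.mul ((hw.sub (continuousOn_solution hφ hφpos hφdiv hw)).mono Ioc_subset_Icc_self))

theorem eq_solution_of_hasDerivWithinAt (hw : ContinuousOn w (Icc 0 b)) {v : ℝ → ℝ}
    (hvbdd : ∃ M, ∀ m ∈ Icc 0 b, |v m| ≤ M)
    (hv : ∀ m ∈ Ioc 0 b, HasDerivWithinAt v (φ m * (w m - v m)) (Ioc 0 b) m)
    (hv0 : v 0 = w 0) {m : ℝ} (hm : m ∈ Icc 0 b) : v m = solution φ b w m := by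
  rcases hm.1.eq_or_lt with rfl | hm0
  · rw [hv0, solution_zero]
  obtain ⟨M, hM⟩ := hvbdd
  obtain ⟨C, hC⟩ := isCompact_Icc.exists_bound_of_continuousOn hw
  refine sub_eq_zero.1 (eq_zero_of_hasDerivWithinAt_eq_neg_mul hφ hφpos hφdiv
    (e := fun x => v x - solution φ b w x) ⟨M + C, fun x hx => ?_⟩
    (fun x hx => ((hv x hx).sub (hasDerivWithinAt_solution hφ hφpos hφdiv hw hx)).congr_deriv
      (by ring)) ⟨hm0, hm.2⟩)
  exact (abs_sub _ _).trans (add_le_add (hM x (Ioc_subset_Icc_self hx))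
    (abs_solution_le hφ hφpos hφdiv hC (Ioc_subset_Icc_self hx)))

end Divergent

end SingularLinearODE

theorem uF_eq_solution (V : ℝ → ℝ) (b lam : ℝ) (w : ℝ → ℝ) :
    uF V b lam w = SingularLinearODE.solution (fun s => (lam * V s)⁻¹) b w := by
  funext m
  unfold uF SingularLinearODE.solution
  split_ifs
  · rfl
  · simp_rw [div_eq_mul_inv, mul_assoc]
    rfl

theorem not_integrableOn_inv_const_mul {V : ℝ → ℝ} {lam b : ℝ} (hlam : lam ≠ 0) (hb : 0 ≤ b)
    (hV : ¬ IntervalIntegrable (fun s => (V s)⁻¹) volume 0 b) :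
    ¬ IntegrableOn (fun s => (lam * V s)⁻¹) (Ioc 0 b) := fun hint =>
  hV <| (intervalIntegrable_iff_integrableOn_Ioc_of_le hb).2 <|
    IntegrableOn.congr_fun (hint.const_mul lam)
      (fun s _ => by simp only [mul_inv, mul_inv_cancel_left₀ hlam]) measurableSet_Ioc

open SingularLinearODE in
theorem stmt_7_general
    (V : ℝ → ℝ)
    (hV : ContDiffOn ℝ 1 V (Set.Icc 0 1))
    (hVpos : ∀ m ∈ Set.Ioc (0:ℝ) 1, 0 < V m)
    (hVdiv : ∀ m ∈ Set.Ioc (0:ℝ) 1,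
      ¬ IntervalIntegrable (fun s => (V s)⁻¹) MeasureTheory.volume 0 m)
    (g : ℝ → ℝ)
    (hgmono : StrictMonoOn g (Set.Icc 0 1))
    (hgmaps : Set.MapsTo g (Set.Icc 0 1) (Set.Icc 0 1))
    (hg0 : g 0 = 0)
    (w : ℝ → ℝ) (hw : ContinuousOn w (Set.Icc 0 (g 1)))
    (lam : ℝ) (hlam : 0 < lam) :
    (∃ M : ℝ, ∀ m ∈ Set.Icc (0:ℝ) (g 1), |uF V (g 1) lam w m| ≤ M) ∧
    ContDiffOn ℝ 1 (uF V (g 1) lam w) (Set.Ioc 0 (g 1)) ∧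
    (∀ m ∈ Set.Ioc (0:ℝ) (g 1),
      uF V (g 1) lam w m +
        lam * V m * derivWithin (uF V (g 1) lam w) (Set.Ioc 0 (g 1)) m = w m) ∧
    uF V (g 1) lam w 0 = w 0 ∧
    (∀ v : ℝ → ℝ,
      (∃ M : ℝ, ∀ m ∈ Set.Icc (0:ℝ) (g 1), |v m| ≤ M) →
      ContDiffOn ℝ 1 v (Set.Ioc 0 (g 1)) →
      (∀ m ∈ Set.Ioc (0:ℝ) (g 1),
        v m + lam * V m * derivWithin v (Set.Ioc 0 (g 1)) m = w m) →
      v 0 = w 0 →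
      ∀ m ∈ Set.Icc (0:ℝ) (g 1), v m = uF V (g 1) lam w m) ∧
    ContinuousOn (uF V (g 1) lam w) (Set.Icc 0 (g 1)) ∧
    (∀ m ∈ Set.Icc (0:ℝ) (g 1),
      |uF V (g 1) lam w m| ≤ sSup ((fun x => |w x|) '' Set.Icc 0 (g 1))) := by
  have hb : 0 < g 1 := hg0 ▸ hgmono (left_mem_Icc.2 zero_le_one) (right_mem_Icc.2 zero_le_one)
    zero_lt_one
  have hb1 : g 1 ≤ 1 := (hgmaps (right_mem_Icc.2 zero_le_one)).2
  have hlamV : ∀ s ∈ Ioc 0 (g 1), 0 < lam * V s := fun s hs =>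
    mul_pos hlam (hVpos s ⟨hs.1, hs.2.trans hb1⟩)
  have hφ : ContinuousOn (fun s => (lam * V s)⁻¹) (Ioc 0 (g 1)) :=
    (continuousOn_const.mul (hV.continuousOn.mono (Ioc_subset_Icc_self.trans
      (Icc_subset_Icc_right hb1)))).inv₀ fun s hs => (hlamV s hs).ne'
  have hφpos : ∀ s ∈ Ioc 0 (g 1), 0 < (lam * V s)⁻¹ := fun s hs => inv_pos.2 (hlamV s hs)
  have hφdiv := not_integrableOn_inv_const_mul hlam.ne' hb.le (hVdiv (g 1) ⟨hb, hb1⟩)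
  have hC (x) (hx : x ∈ Icc 0 (g 1)) : |w x| ≤ sSup ((fun x => |w x|) '' Icc 0 (g 1)) :=
    le_csSup (isCompact_Icc.image_of_continuousOn hw.abs).bddAbove (mem_image_of_mem _ hx)
  rw [uF_eq_solution]
  refine ⟨⟨_, fun m => abs_solution_le hφ hφpos hφdiv hC⟩, contDiffOn_solution hφ hφpos hφdiv hw,
    fun m hm => ?_, solution_zero, fun v hvbdd hvC1 hvode hv0 m => ?_,
    continuousOn_solution hφ hφpos hφdiv hw, fun m => abs_solution_le hφ hφpos hφdiv hC⟩
  · exact (add_mul_eq_iff_eq_inv_mul_sub (hlamV m hm).ne').2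
      ((hasDerivWithinAt_solution hφ hφpos hφdiv hw hm).derivWithin (uniqueDiffOn_Ioc 0 _ m hm))
  · refine eq_solution_of_hasDerivWithinAt hφ hφpos hφdiv hw hvbdd (fun x hx => ?_) hv0
    rw [← (add_mul_eq_iff_eq_inv_mul_sub (hlamV x hx).ne').1 (hvode x hx)]
    exact (hvC1.differentiableOn one_ne_zero x hx).hasDerivWithinAt

theorem stmt_7
    (V : ℝ → ℝ)
    (hV : ContDiffOn ℝ 1 V (Set.Icc 0 1))
    (hV0 : V 0 = 0)
    (hVpos : ∀ m ∈ Set.Ioc (0:ℝ) 1, 0 < V m)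
    (hVdiv : ∀ m ∈ Set.Ioc (0:ℝ) 1,
      ¬ IntervalIntegrable (fun s => (V s)⁻¹) MeasureTheory.volume 0 m)
    (g ginv : ℝ → ℝ)
    (hgcont : ContinuousOn g (Set.Icc 0 1))
    (hgC1 : ContDiffOn ℝ 1 g (Set.Ico 0 1))
    (hgmono : StrictMonoOn g (Set.Icc 0 1))
    (hglt : ∀ m ∈ Set.Ioo (0:ℝ) 1, g m < m)
    (hgmaps : Set.MapsTo g (Set.Icc 0 1) (Set.Icc 0 1))
    (hg0 : g 0 = 0)
    (hginvg : ∀ m ∈ Set.Icc (0:ℝ) 1, ginv (g m) = m)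
    (hgginv : ∀ x ∈ Set.Icc (0:ℝ) (g 1), g (ginv x) = x)
    (hginvext : ∀ x : ℝ, g 1 < x → ginv x = 1)
    (w : ℝ → ℝ) (hw : ContinuousOn w (Set.Icc 0 (g 1)))
    (lam : ℝ) (hlam : 0 < lam) :
    (∃ M : ℝ, ∀ m ∈ Set.Icc (0:ℝ) (g 1), |uF V (g 1) lam w m| ≤ M) ∧
    ContDiffOn ℝ 1 (uF V (g 1) lam w) (Set.Ioc 0 (g 1)) ∧
    (∀ m ∈ Set.Ioc (0:ℝ) (g 1),
      uF V (g 1) lam w m +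
        lam * V m * derivWithin (uF V (g 1) lam w) (Set.Ioc 0 (g 1)) m = w m) ∧
    uF V (g 1) lam w 0 = w 0 ∧
    (∀ v : ℝ → ℝ,
      (∃ M : ℝ, ∀ m ∈ Set.Icc (0:ℝ) (g 1), |v m| ≤ M) →
      ContDiffOn ℝ 1 v (Set.Ioc 0 (g 1)) →
      (∀ m ∈ Set.Ioc (0:ℝ) (g 1),
        v m + lam * V m * derivWithin v (Set.Ioc 0 (g 1)) m = w m) →
      v 0 = w 0 →
      ∀ m ∈ Set.Icc (0:ℝ) (g 1), v m = uF V (g 1) lam w m) ∧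
    ContinuousOn (uF V (g 1) lam w) (Set.Icc 0 (g 1)) ∧
    (∀ m ∈ Set.Icc (0:ℝ) (g 1),
      |uF V (g 1) lam w m| ≤ sSup ((fun x => |w x|) '' Set.Icc 0 (g 1))) :=
  stmt_7_general V hV hVpos hVdiv g hgmono hgmaps hg0 w hw lam hlam
end

section
/- For every λ > 0, the function s ↦ h_λ(s)/(λ V(s)) is integrable on (0,g(1)) and ∫_0^{g(1)} h_λ(s)/(λ V(s)) ds = 1. -/
open MeasureTheory Set Filter Topology intervalIntegral

theorem tendsto_integral_nhdsGT_atTop_of_not_intervalIntegrable {f : ℝ → ℝ} {a b : ℝ}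
    (hab : a < b) (hloc : ∀ m ∈ Ioc a b, IntervalIntegrable f volume m b)
    (hpos : ∀ x ∈ Ioc a b, 0 ≤ f x) (hnot : ¬ IntervalIntegrable f volume a b) :
    Tendsto (fun m => ∫ x in m..b, f x) (𝓝[>] a) atTop := by
  have hnorm : ∀ m ∈ Ioc a b, ∫ x in Ioc m b, ‖f x‖ = ∫ x in m..b, f x := fun m hm => by
    rw [integral_of_le hm.2]
    exact setIntegral_congr_fun measurableSet_Ioc fun x hx =>
      Real.norm_of_nonneg (hpos x ⟨hm.1.trans hx.1, hx.2⟩)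
  have hunbdd : ∀ M, ∃ m ∈ Ioc a b, M < ∫ x in m..b, f x := by
    by_contra! hbdd
    obtain ⟨M, hM⟩ := hbdd
    obtain ⟨u, -, hu, hu_lim⟩ := exists_seq_strictAnti_tendsto' hab
    refine hnot <| (intervalIntegrable_iff_integrableOn_Ioc_of_le hab.le).2 <|
      integrableOn_Ioc_of_intervalIntegral_norm_bounded_left (I := M)
        (fun n => (hloc _ (Ioo_subset_Ioc_self (hu n))).1) hu_lim (.of_forall fun n => ?_)
    rw [hnorm _ (Ioo_subset_Ioc_self (hu n))]
    exact hM _ (Ioo_subset_Ioc_self (hu n))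
  refine tendsto_atTop.2 fun M => ?_
  obtain ⟨m, hm, hMm⟩ := hunbdd M
  filter_upwards [Ioo_mem_nhdsGT hm.1] with x hx
  calc M ≤ ∫ y in m..b, f y := hMm.le
    _ ≤ ∫ y in x..b, f y :=
      integral_mono_interval hx.2.le hm.2 le_rfl
        ((ae_restrict_iff' measurableSet_Ioc).2 <| .of_forall fun y hy =>
          hpos y ⟨hx.1.trans hy.1, hy.2⟩) (hloc x ⟨hx.1, hx.2.le.trans hm.2⟩)

section hlamF

variable {V : ℝ → ℝ} {b lam : ℝ}

theorem hlamF_of_ne_zero {m : ℝ} (hm : m ≠ 0) :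
    hlamF V b lam m = Real.exp (∫ s in b..m, (lam * V s)⁻¹) :=
  if_neg hm

theorem hlamF_nonneg (m : ℝ) : 0 ≤ hlamF V b lam m := by
  unfold hlamF
  split_ifs <;> positivity

theorem hlamF_hasDerivAt (hc : ContinuousOn (fun s => (lam * V s)⁻¹) (Ioc 0 b)) {m : ℝ}
    (hm : m ∈ Ioo 0 b) :
    HasDerivAt (hlamF V b lam) (hlamF V b lam m / (lam * V m)) m := by
  have hsub : uIcc b m ⊆ Ioc 0 b :=
    ordConnected_Ioc.uIcc_subset (right_mem_Ioc.2 (hm.1.trans hm.2)) (Ioo_subset_Ioc_self hm)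
  have hprim : HasDerivAt (fun x => ∫ s in b..x, (lam * V s)⁻¹) (lam * V m)⁻¹ m :=
    integral_hasDerivAt_right ((hc.mono hsub).intervalIntegrable)
      ((hc.mono Ioo_subset_Ioc_self).stronglyMeasurableAtFilter isOpen_Ioo m hm)
      ((hc.mono Ioo_subset_Ioc_self).continuousAt (isOpen_Ioo.mem_nhds hm))
  rw [div_eq_mul_inv, hlamF_of_ne_zero hm.1.ne']
  refine hprim.exp.congr_of_eventuallyEq ?_
  filter_upwards [Ioi_mem_nhds hm.1] with x hx using hlamF_of_ne_zero hx.ne'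

theorem continuousOn_hlamF (hb : 0 < b)
    (hc : ContinuousOn (fun s => (lam * V s)⁻¹) (Ioc 0 b))
    (hdiv : Tendsto (fun m => ∫ s in m..b, (lam * V s)⁻¹) (𝓝[>] 0) atTop) :
    ContinuousOn (hlamF V b lam) (Icc 0 b) := by
  intro m hm
  rcases hm.1.eq_or_lt with rfl | hm0
  · rw [continuousWithinAt_Icc_iff_Ici hb, ← continuousWithinAt_Ioi_iff_Ici, ContinuousWithinAt,
      hlamF, if_pos rfl]
    refine (Real.tendsto_exp_atBot.comp (tendsto_neg_atTop_atBot.comp hdiv)).congr' ?_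
    filter_upwards [self_mem_nhdsWithin] with x hx
    rw [Function.comp_apply, Function.comp_apply, hlamF_of_ne_zero (ne_of_gt hx),
      integral_symm, neg_neg]
  · have hmb : m / 2 ≤ b := by linarith [hm.2]
    have hnhds : uIcc (m / 2) b ∈ 𝓝[Icc 0 b] m := by
      refine mem_nhdsWithin.2 ⟨Ioi (m / 2), isOpen_Ioi, half_lt_self hm0, ?_⟩
      rintro x ⟨hx, hxb⟩
      rw [uIcc_of_le hmb]
      exact ⟨le_of_lt hx, hxb.2⟩
    have hsub : uIcc (m / 2) b ⊆ Ioc 0 b :=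
      ordConnected_Ioc.uIcc_subset ⟨half_pos hm0, hmb⟩ (right_mem_Ioc.2 hb)
    have hprim : ContinuousWithinAt (fun x => ∫ s in b..x, (lam * V s)⁻¹) (uIcc (m / 2) b) m :=
      continuousOn_primitive_interval' (hc.mono hsub).intervalIntegrable right_mem_uIcc m
        (by rw [uIcc_of_le hmb]; exact ⟨(half_lt_self hm0).le, hm.2⟩)
    refine (hprim.rexp.mono_of_mem_nhdsWithin hnhds).congr_of_eventuallyEq ?_
      (hlamF_of_ne_zero hm0.ne')
    filter_upwards [nhdsWithin_le_nhds (Ioi_mem_nhds hm0)] with x hx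
      using hlamF_of_ne_zero (ne_of_gt hx)

end hlamF

theorem stmt_8_general
    (V : ℝ → ℝ)
    (hV : ContDiffOn ℝ 1 V (Set.Icc 0 1))
    (hVpos : ∀ m ∈ Set.Ioc (0:ℝ) 1, 0 < V m)
    (hVdiv : ∀ m ∈ Set.Ioc (0:ℝ) 1,
      ¬ IntervalIntegrable (fun s => (V s)⁻¹) MeasureTheory.volume 0 m)
    (g : ℝ → ℝ)
    (hgmono : StrictMonoOn g (Set.Icc 0 1))
    (hgmaps : Set.MapsTo g (Set.Icc 0 1) (Set.Icc 0 1))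
    (hg0 : g 0 = 0)
    (lam : ℝ) (hlam : 0 < lam) :
    IntervalIntegrable (fun s => hlamF V (g 1) lam s / (lam * V s))
      MeasureTheory.volume 0 (g 1) ∧
    ∫ s in (0:ℝ)..(g 1), hlamF V (g 1) lam s / (lam * V s) = 1 := by
  set b := g 1
  have hb : 0 < b := by
    simpa [hg0] using hgmono (left_mem_Icc.2 zero_le_one) (right_mem_Icc.2 zero_le_one) one_pos
  have hb1 : Ioc 0 b ⊆ Ioc 0 1 := Ioc_subset_Ioc_right (hgmaps (right_mem_Icc.2 zero_le_one)).2
  have hden : ∀ s ∈ Ioc 0 b, 0 < lam * V s := fun s hs => mul_pos hlam (hVpos s (hb1 hs))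
  have hc : ContinuousOn (fun s => (lam * V s)⁻¹) (Ioc 0 b) :=
    (continuousOn_const.mul (hV.continuousOn.mono (hb1.trans Ioc_subset_Icc_self))).inv₀
      fun s hs => (hden s hs).ne'
  have hdiv : ¬ IntervalIntegrable (fun s => (lam * V s)⁻¹) volume 0 b := fun h =>
    hVdiv b (hb1 (right_mem_Ioc.2 hb)) <| by
      convert h.const_mul lam using 2 with s
      rw [mul_inv, ← mul_assoc, mul_inv_cancel₀ hlam.ne', one_mul]
  have hloc : ∀ m ∈ Ioc 0 b, IntervalIntegrable (fun s => (lam * V s)⁻¹) volume m b :=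
    fun m hm => (hc.mono (ordConnected_Ioc.uIcc_subset hm (right_mem_Ioc.2 hb))).intervalIntegrable
  have hcont : ContinuousOn (hlamF V b lam) (Icc 0 b) := continuousOn_hlamF hb hc <|
    tendsto_integral_nhdsGT_atTop_of_not_intervalIntegrable hb hloc
      (fun s hs => (inv_pos.2 (hden s hs)).le) hdiv
  have hderiv : ∀ m ∈ Ioo 0 b, HasDerivAt (hlamF V b lam) (hlamF V b lam m / (lam * V m)) m :=
    fun _ => hlamF_hasDerivAt hc
  have hnonneg : ∀ m ∈ Ioo 0 b, 0 ≤ hlamF V b lam m / (lam * V m) :=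
    fun m hm => div_nonneg (hlamF_nonneg m) (hden m (Ioo_subset_Ioc_self hm)).le
  have hint : IntervalIntegrable (fun s => hlamF V b lam s / (lam * V s)) volume 0 b :=
    intervalIntegrable_deriv_of_nonneg (by rwa [uIcc_of_le hb.le])
      (by simpa [hb.le] using hderiv) (by simpa [hb.le] using hnonneg)
  refine ⟨hint, ?_⟩
  rw [integral_eq_sub_of_hasDerivAt_of_le hb.le hcont hderiv hint, hlamF_of_ne_zero hb.ne',
    hlamF, if_pos rfl, integral_same, Real.exp_zero, sub_zero]

theorem stmt_8
    (V : ℝ → ℝ)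
    (hV : ContDiffOn ℝ 1 V (Set.Icc 0 1))
    (hV0 : V 0 = 0)
    (hVpos : ∀ m ∈ Set.Ioc (0:ℝ) 1, 0 < V m)
    (hVdiv : ∀ m ∈ Set.Ioc (0:ℝ) 1,
      ¬ IntervalIntegrable (fun s => (V s)⁻¹) MeasureTheory.volume 0 m)
    (g ginv : ℝ → ℝ)
    (hgcont : ContinuousOn g (Set.Icc 0 1))
    (hgC1 : ContDiffOn ℝ 1 g (Set.Ico 0 1))
    (hgmono : StrictMonoOn g (Set.Icc 0 1))
    (hglt : ∀ m ∈ Set.Ioo (0:ℝ) 1, g m < m)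
    (hgmaps : Set.MapsTo g (Set.Icc 0 1) (Set.Icc 0 1))
    (hg0 : g 0 = 0)
    (hginvg : ∀ m ∈ Set.Icc (0:ℝ) 1, ginv (g m) = m)
    (hgginv : ∀ x ∈ Set.Icc (0:ℝ) (g 1), g (ginv x) = x)
    (hginvext : ∀ x : ℝ, g 1 < x → ginv x = 1)
    (lam : ℝ) (hlam : 0 < lam) :
    IntervalIntegrable (fun s => hlamF V (g 1) lam s / (lam * V s))
      MeasureTheory.volume 0 (g 1) ∧
    ∫ s in (0:ℝ)..(g 1), hlamF V (g 1) lam s / (lam * V s) = 1 :=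
  stmt_8_general V hV hVpos hVdiv g hgmono hgmaps hg0 lam hlam
end

section
/- Assume hypothesis (H₁) (β satisfies |x₁β(m,x₁) − x₂β(m,x₂)| ≤ l|x₁−x₂| for some l ≥ 0) and assume there exists C ≥ 0 with ∫_m^{g⁻¹(m)} ds/V(s) ≤ C for all m ∈ (0,g(1)]. Set τ₀ = sup_{m ∈ (0,g(1)]} ∫_m^{g⁻¹(m)} ds/V(s), and assume τ_ > τ₀. Let φ be a continuous function on [0,τ̄] × [0,g(1)] and N^φ the continuous solution of the integral equation associated with φ. If there exists b ∈ (0, h⁻¹(e^{−τ_})) such that φ(t,m) = 0 for all m ∈ [0,b] and t ∈ [0,τ̄], then there exists t̄ ≥ 0 such that N^φ(t,m) = 0 for all m ∈ [0,g(1)] and all t ≥ t̄. -/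
noncomputable def piF (h hinv : ℝ → ℝ) (t m : ℝ) : ℝ :=
  hinv (h m * Real.exp (-t))

noncomputable def DeltaF (h hinv ginv : ℝ → ℝ) (s m : ℝ) : ℝ :=
  hinv (h (ginv m) * Real.exp (-s))

noncomputable def xiF (V γ h hinv : ℝ → ℝ) (m t : ℝ) : ℝ :=
  Real.exp (-∫ s in (0:ℝ)..t, (γ (piF h hinv s m) + deriv V (piF h hinv s m)))

noncomputable def KF (V δ h hinv : ℝ → ℝ) (t m : ℝ) : ℝ :=
  Real.exp (-∫ s in (0:ℝ)..t, (δ (piF h hinv s m) + deriv V (piF h hinv s m)))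

noncomputable def zetaF (V γ h hinv ginv : ℝ → ℝ) (k : ℝ → ℝ → ℝ) (m a : ℝ) : ℝ :=
  k m a * xiF V γ h hinv (ginv m) a

noncomputable def GFun (V δ γ h hinv ginv : ℝ → ℝ) (β k : ℝ → ℝ → ℝ) (τu τb : ℝ)
    (N : ℝ → ℝ → ℝ) (t m : ℝ) : ℝ :=
  2 * ∫ s in τb..t,
      (∫ a in τu..τb,
        zetaF V γ h hinv ginv k (piF h hinv (t - s) m) a *
          β (DeltaF h hinv ginv a (piF h hinv (t - s) m))
            (N (s - a) (DeltaF h hinv ginv a (piF h hinv (t - s) m))) *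
          N (s - a) (DeltaF h hinv ginv a (piF h hinv (t - s) m))) *
        KF V δ h hinv (t - s) m

noncomputable def JFun (V δ h hinv : ℝ → ℝ) (β : ℝ → ℝ → ℝ) (τb : ℝ)
    (N : ℝ → ℝ → ℝ) (t m : ℝ) : ℝ :=
  ∫ s in τb..t,
    KF V δ h hinv (t - s) m * β (piF h hinv (t - s) m) (N s (piF h hinv (t - s) m)) *
      N s (piF h hinv (t - s) m)

def IsSol (V δ γ h hinv g ginv : ℝ → ℝ) (β k : ℝ → ℝ → ℝ) (τu τb : ℝ)
    (φ N : ℝ → ℝ → ℝ) : Prop :=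
  ContinuousOn (fun q : ℝ × ℝ => N q.1 q.2) (Set.Ici 0 ×ˢ Set.Icc 0 (g 1)) ∧
  (∀ t ∈ Set.Icc (0:ℝ) τb, ∀ m ∈ Set.Icc (0:ℝ) (g 1), N t m = φ t m) ∧
  (∀ t : ℝ, τb ≤ t → ∀ m ∈ Set.Icc (0:ℝ) (g 1),
    N t m = φ τb (piF h hinv (t - τb) m) * KF V δ h hinv (t - τb) m +
      GFun V δ γ h hinv ginv β k τu τb N t m - JFun V δ h hinv β τb N t m)

/-!
Put `ε = 1 - τ0 / τu ∈ (0, 1]` and `Ω t = {m ∈ [0, g 1] | h m ≤ h b · e^{ε (t - τb)}}`.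
In the coordinate `h` the characteristic flow multiplies by `e^{-t}` and `g⁻¹` multiplies by at
most `e^{τ0}`; as the division term looks back by a delay `a ≥ τu` and `τ0 ≤ (1 - ε) τu`, both
maps carry the family `Ω` into itself. So for `m ∈ Ω t` the transported datum and the birth term
vanish once `N` vanishes on `Ω` up to time `t - τu`, and what is left of the equation is the
linear Volterra term `J`, a contraction over short time steps. Stepping forward by a fixed length,
`N` vanishes on every `Ω t`, and `Ω t` is all of `[0, g 1]` once `h b · e^{ε (t - τb)} ≥ 1`.
-/

open Set Real Filter

lemma mul_exp_neg_mem_Icc {x u : ℝ} (hx : x ∈ Icc (0:ℝ) 1) (hu : 0 ≤ u) :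
    x * exp (-u) ∈ Icc (0:ℝ) 1 :=
  ⟨mul_nonneg hx.1 (exp_nonneg _),
    mul_le_one₀ hx.2 (exp_nonneg _) (exp_le_one_iff.2 (neg_nonpos.2 hu))⟩

lemma exists_abs_deriv_le_of_contDiffOn_Icc {f : ℝ → ℝ} {a b : ℝ} (hab : a < b)
    (hf : ContDiffOn ℝ 1 f (Icc a b)) : ∃ M, 0 ≤ M ∧ ∀ x ∈ Icc a b, |deriv f x| ≤ M := by
  obtain ⟨M, hM⟩ := isCompact_Icc.exists_bound_of_continuousOn
    (hf.continuousOn_derivWithin (uniqueDiffOn_Icc hab) le_rfl)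
  refine ⟨max M (max |deriv f a| |deriv f b|),
    (abs_nonneg _).trans ((le_max_left _ _).trans (le_max_right _ _)), fun x hx => ?_⟩
  -- at the endpoints `deriv f` is the two-sided derivative, which `derivWithin` does not control
  rcases eq_endpoints_or_mem_Ioo_of_mem_Icc hx with rfl | rfl | hx'
  · exact (le_max_left _ _).trans (le_max_right _ _)
  · exact (le_max_right _ _).trans (le_max_right _ _)
  · rw [← derivWithin_of_mem_nhds (Icc_mem_nhds hx'.1 hx'.2), ← Real.norm_eq_abs]
    exact (hM x hx).trans (le_max_left _ _)

lemma exp_neg_integral_le {f : ℝ → ℝ} {u M : ℝ} (hu : 0 ≤ u) (hM : 0 ≤ M)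
    (hf : ∀ s ∈ Icc 0 u, -M ≤ f s) : exp (-∫ s in (0:ℝ)..u, f s) ≤ exp (u * M) := by
  by_cases hint : IntervalIntegrable f MeasureTheory.volume 0 u
  · have hmono := intervalIntegral.integral_mono_on hu intervalIntegrable_const hint hf
    rw [intervalIntegral.integral_const, smul_eq_mul] at hmono
    exact exp_le_exp.2 (by linarith)
  · rw [intervalIntegral.integral_undef hint, neg_zero, exp_zero]
    exact one_le_exp (mul_nonneg hu hM)

lemma abs_integral_le_of_eq_zero_of_abs_le {f : ℝ → ℝ} {a b c L : ℝ} (hab : a ≤ b) (hbc : b ≤ c)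
    (hzero : ∀ s ∈ Icc a b, f s = 0) (hL : ∀ s ∈ Ioc b c, |f s| ≤ L) :
    |∫ s in a..c, f s| ≤ L * (c - b) := by
  by_cases hint : IntervalIntegrable f MeasureTheory.volume a c
  · have hac : a ≤ c := hab.trans hbc
    rw [← intervalIntegral.integral_add_adjacent_intervals
      (hint.mono_set (uIcc_subset_uIcc_left (by rwa [uIcc_of_le hac, mem_Icc, and_iff_left hbc])))
      (hint.mono_set (uIcc_subset_uIcc_right (by rwa [uIcc_of_le hac, mem_Icc, and_iff_left hbc]))),
      intervalIntegral.integral_congr (g := fun _ => 0) (by rwa [uIcc_of_le hab]),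
      intervalIntegral.integral_zero, zero_add, ← abs_of_nonneg (sub_nonneg.2 hbc)]
    exact intervalIntegral.norm_integral_le_of_norm_le_const (f := f)
      fun s hs => hL s (by rwa [uIoc_of_le hbc] at hs)
  · rw [intervalIntegral.integral_undef hint, abs_zero]
    rcases hbc.eq_or_lt with rfl | hlt
    · rw [sub_self, mul_zero]
    · exact mul_nonneg ((abs_nonneg _).trans (hL c ⟨hlt, le_rfl⟩)) (sub_nonneg.2 hbc)

lemma eq_zero_of_abs_le_mul_bound {α : Type*} {E : Set α} {f : α → ℝ} {q R : ℝ} (hq : q < 1)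
    (hR : ∀ p ∈ E, |f p| ≤ R) (hf : ∀ S, (∀ p ∈ E, |f p| ≤ S) → ∀ p ∈ E, |f p| ≤ q * S) :
    ∀ p ∈ E, f p = 0 := by
  intro p hp
  have hle : ∀ p ∈ E, |f p| ≤ sSup ((fun p => |f p|) '' E) := fun p hp =>
    le_csSup ⟨R, forall_mem_image.2 hR⟩ (mem_image_of_mem _ hp)
  have hS : sSup ((fun p => |f p|) '' E) ≤ q * sSup ((fun p => |f p|) '' E) :=
    csSup_le (image_nonempty.2 ⟨p, hp⟩) (forall_mem_image.2 (hf _ hle))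
  have hS0 := (abs_nonneg (f p)).trans (hle p hp)
  exact abs_nonpos_iff.1 ((hle p hp).trans (by nlinarith))

lemma induction_on_step_add {P : ℝ → Prop} (hmono : ∀ ⦃T T'⦄, T' ≤ T → P T → P T') {a b η : ℝ}
    (hη : 0 < η) (hbase : P a) (hstep : ∀ T, a ≤ T → T ≤ b → P T → P (T + η)) : P b := by
  have key : ∀ n : ℕ, P (min (a + n * η) b) := by
    intro n
    induction n with
    | zero => simpa using hmono (min_le_left a b) hbase
    | succ n ih =>
      have han : a ≤ a + n * η := le_add_of_nonneg_right (by positivity)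
      rcases le_total (a + n * η) b with hle | hle
      · rw [min_eq_left hle] at ih
        exact hmono ((min_le_left _ _).trans_eq (by push_cast; ring)) (hstep _ han hle ih)
      · rw [min_eq_right hle] at ih
        rwa [min_eq_right (by push_cast; nlinarith)]
  obtain ⟨n, hn⟩ := exists_nat_ge ((b - a) / η)
  have hb : b ≤ a + n * η := by rw [div_le_iff₀ hη] at hn; linarith
  simpa [min_eq_right hb] using key n

section Characteristics

variable {h hinv : ℝ → ℝ}

lemma piF_mem_Icc (hh : MapsTo h (Icc 0 1) (Icc 0 1)) (hinvMaps : MapsTo hinv (Icc 0 1) (Icc 0 1))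
    {u m : ℝ} (hu : 0 ≤ u) (hm : m ∈ Icc (0:ℝ) 1) : piF h hinv u m ∈ Icc (0:ℝ) 1 :=
  hinvMaps (mul_exp_neg_mem_Icc (hh hm) hu)

lemma h_piF (hh : MapsTo h (Icc 0 1) (Icc 0 1)) (hHinv : ∀ x ∈ Icc (0:ℝ) 1, h (hinv x) = x)
    {u m : ℝ} (hu : 0 ≤ u) (hm : m ∈ Icc (0:ℝ) 1) : h (piF h hinv u m) = h m * exp (-u) :=
  hHinv _ (mul_exp_neg_mem_Icc (hh hm) hu)

lemma DeltaF_eq_piF (ginv : ℝ → ℝ) (s m : ℝ) : DeltaF h hinv ginv s m = piF h hinv s (ginv m) :=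
  rfl

lemma KF_pos (V δ : ℝ → ℝ) (u m : ℝ) : 0 < KF V δ h hinv u m :=
  exp_pos _

lemma KF_le_exp {V δ : ℝ → ℝ} {M : ℝ} (hh : MapsTo h (Icc 0 1) (Icc 0 1))
    (hinvMaps : MapsTo hinv (Icc 0 1) (Icc 0 1)) (hδ : ∀ x ∈ Icc (0:ℝ) 1, 0 ≤ δ x)
    (hV : ∀ x ∈ Icc (0:ℝ) 1, |deriv V x| ≤ M) (hM : 0 ≤ M) {u m : ℝ} (hu : u ∈ Icc (0:ℝ) 1)
    (hm : m ∈ Icc (0:ℝ) 1) : KF V δ h hinv u m ≤ exp M := by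
  refine (exp_neg_integral_le hu.1 hM fun s hs => ?_).trans
    (exp_le_exp.2 (mul_le_of_le_one_left hM hu.2))
  have hs' := piF_mem_Icc hh hinvMaps hs.1 hm
  linarith [hδ _ hs', neg_le_of_abs_le (hV _ hs')]

end Characteristics

section Potential

variable {V h : ℝ → ℝ}

lemma intervalIntegrable_inv_of_mem_Ioc (hV : ContinuousOn V (Icc 0 1))
    (hVpos : ∀ m ∈ Ioc (0:ℝ) 1, 0 < V m) {x y : ℝ} (hx : x ∈ Ioc (0:ℝ) 1)
    (hy : y ∈ Ioc (0:ℝ) 1) : IntervalIntegrable (fun s => (V s)⁻¹) MeasureTheory.volume x y := by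
  have hsub : uIcc x y ⊆ Ioc 0 1 := ordConnected_Ioc.uIcc_subset hx hy
  exact ((hV.mono (hsub.trans Ioc_subset_Icc_self)).inv₀
    fun s hs => (hVpos s (hsub hs)).ne').intervalIntegrable

lemma h_eq_mul_exp_integral (hV : ContinuousOn V (Icc 0 1))
    (hVpos : ∀ m ∈ Ioc (0:ℝ) 1, 0 < V m)
    (hHdef : ∀ m ∈ Ioc (0:ℝ) 1, h m = exp (-∫ s in m..1, (V s)⁻¹)) {x y : ℝ}
    (hx : x ∈ Ioc (0:ℝ) 1) (hy : y ∈ Ioc (0:ℝ) 1) :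
    h y = h x * exp (∫ s in x..y, (V s)⁻¹) := by
  rw [hHdef y hy, hHdef x hx, ← exp_add, ← intervalIntegral.integral_add_adjacent_intervals
    (intervalIntegrable_inv_of_mem_Ioc hV hVpos hx hy)
    (intervalIntegrable_inv_of_mem_Ioc hV hVpos hy (right_mem_Ioc.2 one_pos))]
  ring_nf

lemma exp_neg_le_h (hHdef : ∀ m ∈ Ioc (0:ℝ) 1, h m = exp (-∫ s in m..1, (V s)⁻¹)) {x τ : ℝ}
    (hx : x ∈ Ioc (0:ℝ) 1) (hτ : ∫ s in x..1, (V s)⁻¹ ≤ τ) : exp (-τ) ≤ h x := by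
  rw [hHdef x hx]
  exact exp_le_exp.2 (neg_le_neg hτ)

variable {g ginv : ℝ → ℝ}

lemma g_one_mem_Ioc (hgmono : StrictMonoOn g (Icc 0 1)) (hgmaps : MapsTo g (Icc 0 1) (Icc 0 1))
    (hg0 : g 0 = 0) : g 1 ∈ Ioc (0:ℝ) 1 :=
  ⟨hg0 ▸ hgmono (left_mem_Icc.2 zero_le_one) (right_mem_Icc.2 zero_le_one) one_pos,
    (hgmaps (right_mem_Icc.2 zero_le_one)).2⟩

lemma ginv_zero (hg0 : g 0 = 0) (hginvg : ∀ m ∈ Icc (0:ℝ) 1, ginv (g m) = m) : ginv 0 = 0 := by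
  simpa [hg0] using hginvg 0 (left_mem_Icc.2 zero_le_one)

lemma ginv_mem_Ioc (hgcont : ContinuousOn g (Icc 0 1)) (hg0 : g 0 = 0)
    (hginvg : ∀ m ∈ Icc (0:ℝ) 1, ginv (g m) = m) {x : ℝ} (hx : x ∈ Ioc 0 (g 1)) :
    ginv x ∈ Ioc (0:ℝ) 1 := by
  obtain ⟨m, hm, rfl⟩ := intermediate_value_Icc zero_le_one hgcont
    (by rw [hg0]; exact Ioc_subset_Icc_self hx)
  rw [hginvg m hm]
  refine ⟨hm.1.lt_of_ne ?_, hm.2⟩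
  rintro rfl
  exact hx.1.ne' hg0

lemma ginv_mem_Icc (hgcont : ContinuousOn g (Icc 0 1)) (hg0 : g 0 = 0)
    (hginvg : ∀ m ∈ Icc (0:ℝ) 1, ginv (g m) = m) {x : ℝ} (hx : x ∈ Icc 0 (g 1)) :
    ginv x ∈ Icc (0:ℝ) 1 := by
  rcases hx.1.eq_or_lt with rfl | hx0
  · rw [ginv_zero hg0 hginvg]
    exact left_mem_Icc.2 zero_le_one
  · exact Ioc_subset_Icc_self (ginv_mem_Ioc hgcont hg0 hginvg ⟨hx0, hx.2⟩)

lemma h_ginv_le_mul_exp (hV : ContinuousOn V (Icc 0 1)) (hVpos : ∀ m ∈ Ioc (0:ℝ) 1, 0 < V m)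
    (hHdef : ∀ m ∈ Ioc (0:ℝ) 1, h m = exp (-∫ s in m..1, (V s)⁻¹)) (hH0 : h 0 = 0)
    (hgcont : ContinuousOn g (Icc 0 1)) (hg0 : g 0 = 0)
    (hginvg : ∀ m ∈ Icc (0:ℝ) 1, ginv (g m) = m) (hg1 : g 1 ≤ 1) {τ0 : ℝ}
    (hτ0 : ∀ m ∈ Ioc (0:ℝ) (g 1), ∫ s in m..(ginv m), (V s)⁻¹ ≤ τ0) {x : ℝ}
    (hx : x ∈ Icc 0 (g 1)) : h (ginv x) ≤ h x * exp τ0 := by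
  rcases hx.1.eq_or_lt with rfl | hx0
  · rw [ginv_zero hg0 hginvg, hH0, zero_mul]
  have hx1 : x ∈ Ioc (0:ℝ) 1 := ⟨hx0, hx.2.trans hg1⟩
  rw [h_eq_mul_exp_integral hV hVpos hHdef hx1 (ginv_mem_Ioc hgcont hg0 hginvg ⟨hx0, hx.2⟩)]
  exact mul_le_mul_of_nonneg_left (exp_le_exp.2 (hτ0 x ⟨hx0, hx.2⟩))
    (by rw [hHdef x hx1]; positivity)

end Potential

structure IsCharacteristicInvariant (h hinv ginv : ℝ → ℝ) (τu : ℝ) (Ω : ℝ → Set ℝ) : Prop where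
  transport : ∀ ⦃s t⦄, s ≤ t → ∀ m ∈ Ω t, piF h hinv (t - s) m ∈ Ω s
  division : ∀ ⦃s a⦄, τu ≤ a → ∀ m ∈ Ω s, DeltaF h hinv ginv a m ∈ Ω (s - a)

def VanishesUpTo (N : ℝ → ℝ → ℝ) (Ω : ℝ → Set ℝ) (T : ℝ) : Prop :=
  ∀ t ∈ Icc 0 T, ∀ m ∈ Ω t, N t m = 0

lemma VanishesUpTo.mono {N : ℝ → ℝ → ℝ} {Ω : ℝ → Set ℝ} {T T' : ℝ} (hP : VanishesUpTo N Ω T)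
    (hT : T' ≤ T) : VanishesUpTo N Ω T' :=
  fun t ht => hP t ⟨ht.1, ht.2.trans hT⟩

lemma GFun_eq_zero {V δ γ h hinv ginv : ℝ → ℝ} {β k : ℝ → ℝ → ℝ} {τu τb : ℝ}
    {N : ℝ → ℝ → ℝ} {t m : ℝ} (hτ : τu ≤ τb) (ht : τb ≤ t)
    (hN : ∀ s ∈ Icc τb t, ∀ a ∈ Icc τu τb,
      N (s - a) (DeltaF h hinv ginv a (piF h hinv (t - s) m)) = 0) :
    GFun V δ γ h hinv ginv β k τu τb N t m = 0 := by
  rw [GFun, intervalIntegral.integral_congr (g := fun _ => 0), intervalIntegral.integral_zero,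
    mul_zero]
  intro s hs
  rw [uIcc_of_le ht] at hs
  dsimp only
  rw [intervalIntegral.integral_congr (g := fun _ => 0), intervalIntegral.integral_zero, zero_mul]
  intro a ha
  rw [uIcc_of_le hτ] at ha
  simp only [hN s hs a ha, mul_zero]

namespace IsSol

variable {V δ γ h hinv g ginv : ℝ → ℝ} {β k : ℝ → ℝ → ℝ} {τu τb : ℝ} {φ N : ℝ → ℝ → ℝ}
  {Ω : ℝ → Set ℝ}

lemma eq_neg_JFun (hN : IsSol V δ γ h hinv g ginv β k τu τb φ N) (hΩ : ∀ t, Ω t ⊆ Icc 0 (g 1))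
    (hΩinv : IsCharacteristicInvariant h hinv ginv τu Ω)
    (hφ : ∀ t ∈ Icc 0 τb, ∀ m ∈ Ω t, φ t m = 0) (hτb : 0 ≤ τb) (hτ : τu ≤ τb) {t m : ℝ}
    (hP : VanishesUpTo N Ω (t - τu)) (ht : τb ≤ t) (hm : m ∈ Ω t) :
    N t m = -JFun V δ h hinv β τb N t m := by
  have hφ0 : φ τb (piF h hinv (t - τb) m) = 0 :=
    hφ τb ⟨hτb, le_rfl⟩ _ (hΩinv.transport ht m hm)
  have hG : GFun V δ γ h hinv ginv β k τu τb N t m = 0 := GFun_eq_zero hτ ht fun s hs a ha =>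
    hP (s - a) ⟨by linarith [hs.1, ha.2], by linarith [hs.2, ha.1]⟩ _
      (hΩinv.division ha.1 _ (hΩinv.transport hs.2 m hm))
  rw [hN.2.2 t ht m (hΩ t hm), hφ0, hG]
  ring

lemma vanishesUpTo_add (hN : IsSol V δ γ h hinv g ginv β k τu τb φ N)
    (hΩ : ∀ t, Ω t ⊆ Icc 0 (g 1)) (hΩinv : IsCharacteristicInvariant h hinv ginv τu Ω)
    (hφ : ∀ t ∈ Icc 0 τb, ∀ m ∈ Ω t, φ t m = 0) (hτb : 0 ≤ τb) (hτ : τu ≤ τb)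
    {T η R B κ : ℝ} (hT : τb ≤ T) (hη1 : η ≤ 1) (hητ : η ≤ τu) (hκ0 : 0 ≤ κ) (hB0 : 0 ≤ B)
    (hq : κ * B * η < 1) (hR : ∀ t ∈ Icc 0 (T + η), ∀ m ∈ Icc 0 (g 1), |N t m| ≤ R)
    (hB : ∀ m ∈ Icc 0 (g 1), ∀ x ∈ Icc (-R) R, |β m x| ≤ B)
    (hκ : ∀ u ∈ Icc (0:ℝ) 1, ∀ m ∈ Icc 0 (g 1), KF V δ h hinv u m ≤ κ)
    (hP : VanishesUpTo N Ω T) : VanishesUpTo N Ω (T + η) := by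
  set E : Set (ℝ × ℝ) := {p | p.1 ∈ Icc T (T + η) ∧ p.2 ∈ Ω p.1}
  have hE0 : ∀ p ∈ E, 0 ≤ p.1 := fun p hp => hτb.trans (hT.trans hp.1.1)
  have hE : ∀ p ∈ E, N p.1 p.2 = 0 := by
    refine eq_zero_of_abs_le_mul_bound hq (fun p hp => hR _ ⟨hE0 p hp, hp.1.2⟩ _ (hΩ _ hp.2)) ?_
    rintro S hS ⟨t, m⟩ ⟨ht, hm⟩
    have hS0 : 0 ≤ S := (abs_nonneg _).trans (hS _ ⟨ht, hm⟩)
    have hη0 : 0 ≤ η := by linarith [ht.1, ht.2]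
    rcases ht.1.eq_or_lt with rfl | hTt
    · rw [hP _ ⟨hE0 _ ⟨ht, hm⟩, le_rfl⟩ m hm, abs_zero]
      exact mul_nonneg (mul_nonneg (mul_nonneg hκ0 hB0) hη0) hS0
    rw [hN.eq_neg_JFun hΩ hΩinv hφ hτb hτ (hP.mono (by linarith [ht.2])) (hT.trans ht.1) hm,
      abs_neg]
    calc |JFun V δ h hinv β τb N t m| ≤ κ * B * S * (t - T) := by
          refine abs_integral_le_of_eq_zero_of_abs_le hT ht.1 (fun s hs => ?_) (fun s hs => ?_)
          · rw [hP s ⟨hτb.trans hs.1, hs.2⟩ _ (hΩinv.transport (hs.2.trans ht.1) m hm), mul_zero]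
          · have hfoot := hΩinv.transport hs.2 m hm
            have hsE : (s, piF h hinv (t - s) m) ∈ E := ⟨⟨hs.1.le, hs.2.trans ht.2⟩, hfoot⟩
            have hNR := abs_le.1 (hR _ ⟨hE0 _ hsE, hsE.1.2⟩ _ (hΩ _ hfoot))
            rw [abs_mul, abs_mul, abs_of_pos (KF_pos _ _ _ _)]
            gcongr
            · exact hκ _ ⟨by linarith [hs.2], by linarith [hs.1, ht.2]⟩ m (hΩ t hm)
            · exact hB _ (hΩ _ hfoot) _ hNR
            · exact hS _ hsE
      _ ≤ κ * B * η * S := by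
          have := mul_nonneg (mul_nonneg hκ0 hB0) hS0
          nlinarith [ht.2]
  intro t ht m hm
  rcases le_or_gt t T with htT | hTt
  · exact hP t ⟨ht.1, htT⟩ m hm
  · exact hE (t, m) ⟨⟨hTt.le, ht.2⟩, hm⟩

theorem eq_zero_of_mem (hN : IsSol V δ γ h hinv g ginv β k τu τb φ N) (hτu : 0 < τu)
    (hτ : τu ≤ τb) (hβ : ContinuousOn (fun q : ℝ × ℝ => β q.1 q.2) (Icc 0 (g 1) ×ˢ univ))
    {κ : ℝ} (hκ : ∀ u ∈ Icc (0:ℝ) 1, ∀ m ∈ Icc 0 (g 1), KF V δ h hinv u m ≤ κ)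
    (hΩ : ∀ t, Ω t ⊆ Icc 0 (g 1)) (hΩinv : IsCharacteristicInvariant h hinv ginv τu Ω)
    (hφ : ∀ t ∈ Icc 0 τb, ∀ m ∈ Ω t, φ t m = 0) {t m : ℝ} (ht : 0 ≤ t) (hm : m ∈ Ω t) :
    N t m = 0 := by
  have hτb : 0 ≤ τb := hτu.le.trans hτ
  have hm' := hΩ t hm
  obtain ⟨R, hR⟩ := (isCompact_Icc.prod isCompact_Icc).exists_bound_of_continuousOn
    (hN.1.mono (prod_mono (Icc_subset_Ici_self : Icc (0:ℝ) (t + 1) ⊆ Ici 0) subset_rfl))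
  obtain ⟨B, hB⟩ := (isCompact_Icc.prod isCompact_Icc).exists_bound_of_continuousOn
    (hβ.mono (prod_mono subset_rfl (subset_univ (Icc (-R) R))))
  have hB0 : 0 ≤ B := (norm_nonneg _).trans
    (hB (m, N t m) ⟨hm', abs_le.1 (hR (t, m) ⟨⟨ht, by linarith⟩, hm'⟩)⟩)
  have hκ0 : 0 ≤ κ := (KF_pos _ _ _ _).le.trans (hκ 0 (left_mem_Icc.2 zero_le_one) m hm')
  obtain ⟨c, hc0, hc⟩ := exists_pos_mul_lt one_pos (κ * B)
  set η := min c (min 1 τu)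
  have hη0 : 0 < η := lt_min hc0 (lt_min one_pos hτu)
  have hq : κ * B * η < 1 :=
    (mul_le_mul_of_nonneg_left (min_le_left _ _) (mul_nonneg hκ0 hB0)).trans_lt hc
  refine induction_on_step_add (P := VanishesUpTo N Ω) (fun _ _ hT hP => hP.mono hT) hη0
    (fun s hs m hm => (hN.2.1 s hs m (hΩ s hm)).trans (hφ s hs m hm))
    (fun T hT hTt hP => hN.vanishesUpTo_add hΩ hΩinv hφ hτb hτ hT
      ((min_le_right _ _).trans (min_le_left _ _)) ((min_le_right _ _).trans (min_le_right _ _))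
      hκ0 hB0 hq (fun s hs m hm => hR (s, m) ⟨⟨hs.1, ?_⟩, hm⟩) (fun m hm x hx => hB (m, x) ⟨hm, hx⟩)
      hκ hP) t ⟨ht, le_rfl⟩ m hm
  linarith [hs.2, (min_le_right c (min 1 τu)).trans (min_le_left 1 τu)]

end IsSol

def expSublevelSet (h : ℝ → ℝ) (m₁ c ε t : ℝ) : Set ℝ :=
  {m ∈ Icc 0 m₁ | h m ≤ c * exp (ε * t)}

section Sublevel

variable {h hinv ginv : ℝ → ℝ} {m₁ c ε : ℝ}

lemma expSublevelSet_subset (t : ℝ) : expSublevelSet h m₁ c ε t ⊆ Icc 0 m₁ :=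
  fun _ hm => hm.1

lemma isCharacteristicInvariant_expSublevelSet {τu τ0 : ℝ}
    (hh : MapsTo h (Icc 0 1) (Icc 0 1)) (hmono : StrictMonoOn h (Icc 0 1))
    (hinvMaps : MapsTo hinv (Icc 0 1) (Icc 0 1)) (hHinv : ∀ x ∈ Icc (0:ℝ) 1, h (hinv x) = x)
    (hm₁ : m₁ ≤ 1) (hginv : ∀ w ∈ Icc 0 m₁, ginv w ∈ Icc (0:ℝ) 1)
    (hratio : ∀ w ∈ Icc 0 m₁, h (ginv w) ≤ h w * exp τ0) (hτu : 0 ≤ τu)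
    (hexp : exp (-τu) ≤ h m₁) (hc : 0 ≤ c) (hε : ε ≤ 1) (hτ0 : τ0 ≤ (1 - ε) * τu) :
    IsCharacteristicInvariant h hinv ginv τu (expSublevelSet h m₁ c ε) where
  transport s t hst m hm := by
    have hm1 : m ∈ Icc (0:ℝ) 1 := ⟨hm.1.1, hm.1.2.trans hm₁⟩
    have hu : 0 ≤ t - s := sub_nonneg.2 hst
    have hfoot := piF_mem_Icc hh hinvMaps hu hm1
    have hle : h (piF h hinv (t - s) m) ≤ h m := by
      rw [h_piF hh hHinv hu hm1]
      exact mul_le_of_le_one_right (hh hm1).1 (exp_le_one_iff.2 (by linarith))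
    refine ⟨⟨hfoot.1, ((hmono.le_iff_le hfoot hm1).1 hle).trans hm.1.2⟩, ?_⟩
    calc h (piF h hinv (t - s) m) = h m * exp (-(t - s)) := h_piF hh hHinv hu hm1
      _ ≤ c * exp (ε * t) * exp (-(t - s)) := by gcongr; exact hm.2
      _ = c * exp (ε * s + (ε - 1) * (t - s)) := by rw [mul_assoc, ← exp_add]; ring_nf
      _ ≤ c * exp (ε * s) := by gcongr; nlinarith
  division s a ha w hw := by
    have ha0 : 0 ≤ a := hτu.trans ha
    have hy := hginv w hw.1
    have hΔ := h_piF hh hHinv ha0 hy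
    have hΔmem := piF_mem_Icc hh hinvMaps ha0 hy
    have hm₁' : m₁ ∈ Icc (0:ℝ) 1 := ⟨hw.1.1.trans hw.1.2, hm₁⟩
    rw [DeltaF_eq_piF]
    refine ⟨⟨hΔmem.1, (hmono.le_iff_le hΔmem hm₁').1 ?_⟩, ?_⟩
    · calc h (piF h hinv a (ginv w)) = h (ginv w) * exp (-a) := hΔ
        _ ≤ 1 * exp (-τu) := by gcongr; exact (hh hy).2
        _ ≤ h m₁ := by rw [one_mul]; exact hexp
    · calc h (piF h hinv a (ginv w)) = h (ginv w) * exp (-a) := hΔ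
        _ ≤ h w * exp τ0 * exp (-a) := by gcongr; exact hratio w hw.1
        _ ≤ c * exp (ε * s) * exp τ0 * exp (-a) := by gcongr; exact hw.2
        _ = c * exp (ε * (s - a) + (τ0 - (1 - ε) * a)) := by
            rw [mul_assoc, mul_assoc, ← exp_add, ← exp_add]; ring_nf
        _ ≤ c * exp (ε * (s - a)) := by gcongr; nlinarith

lemma expSublevelSet_subset_Icc (hmono : StrictMonoOn h (Icc 0 1)) (hm₁ : m₁ ≤ 1) {b t t₀ : ℝ}
    (hb : b ∈ Icc (0:ℝ) 1) (hhb : 0 ≤ h b) (hε : 0 ≤ ε) (ht : t ≤ t₀) :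
    expSublevelSet h m₁ (h b * exp (-(ε * t₀))) ε t ⊆ Icc 0 b := by
  refine fun m hm => ⟨hm.1.1, (hmono.le_iff_le ⟨hm.1.1, hm.1.2.trans hm₁⟩ hb).1 (hm.2.trans ?_)⟩
  rw [mul_assoc, ← exp_add]
  exact mul_le_of_le_one_right hhb (exp_le_one_iff.2 (by nlinarith))

lemma eventually_expSublevelSet_eq (hh : ∀ m ∈ Icc 0 m₁, h m ≤ 1) (hc : 0 < c) (hε : 0 < ε) :
    ∀ᶠ t in atTop, expSublevelSet h m₁ c ε t = Icc 0 m₁ := by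
  have hgrow : Tendsto (fun t => c * exp (ε * t)) atTop atTop :=
    (tendsto_exp_atTop.comp (tendsto_id.const_mul_atTop hε)).const_mul_atTop hc
  filter_upwards [hgrow.eventually_ge_atTop 1] with t ht
  exact (expSublevelSet_subset t).antisymm fun m hm => ⟨hm, (hh m hm).trans ht⟩

end Sublevel

theorem stmt_16_general
    (V : ℝ → ℝ)
    (hV : ContDiffOn ℝ 1 V (Set.Icc 0 1))
    (hVpos : ∀ m ∈ Set.Ioc (0:ℝ) 1, 0 < V m)
    (h hinv : ℝ → ℝ)
    (hHdef : ∀ m ∈ Set.Ioc (0:ℝ) 1, h m = Real.exp (-∫ s in m..1, (V s)⁻¹))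
    (hH0 : h 0 = 0)
    (hHmono : StrictMonoOn h (Set.Icc 0 1))
    (hHbij : Set.BijOn h (Set.Icc 0 1) (Set.Icc 0 1))
    (hHinv : ∀ x ∈ Set.Icc (0:ℝ) 1, h (hinv x) = x)
    (hinvMaps : Set.MapsTo hinv (Set.Icc 0 1) (Set.Icc 0 1))
    (g ginv : ℝ → ℝ)
    (hgcont : ContinuousOn g (Set.Icc 0 1))
    (hgmono : StrictMonoOn g (Set.Icc 0 1))
    (hgmaps : Set.MapsTo g (Set.Icc 0 1) (Set.Icc 0 1))
    (hg0 : g 0 = 0)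
    (hginvg : ∀ m ∈ Set.Icc (0:ℝ) 1, ginv (g m) = m)
    (δ γ : ℝ → ℝ)
    (hδpos : ∀ m ∈ Set.Icc (0:ℝ) 1, 0 ≤ δ m)
    (β : ℝ → ℝ → ℝ)
    (hβcont : ContinuousOn (fun q : ℝ × ℝ => β q.1 q.2) (Set.Icc 0 (g 1) ×ˢ Set.univ))
    (τu τb : ℝ) (hτu : 0 < τu) (hτb : τu < τb)
    (k : ℝ → ℝ → ℝ)
    (C : ℝ)
    (hCbound : ∀ m ∈ Set.Ioc (0:ℝ) (g 1), ∫ s in m..(ginv m), (V s)⁻¹ ≤ C)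
    (τ0 : ℝ)
    (hτ0 : τ0 = sSup ((fun m => ∫ s in m..(ginv m), (V s)⁻¹) '' Set.Ioc 0 (g 1)))
    (hτuτ0 : τ0 < τu)
    (φ : ℝ → ℝ → ℝ)
    (N : ℝ → ℝ → ℝ)
    (hN : IsSol V δ γ h hinv g ginv β k τu τb φ N)
    (b : ℝ) (hb : b ∈ Set.Ioo 0 (hinv (Real.exp (-τu))))
    (hφ0 : ∀ t ∈ Set.Icc (0:ℝ) τb, ∀ m ∈ Set.Icc (0:ℝ) b, φ t m = 0) :
    ∃ tbar : ℝ, 0 ≤ tbar ∧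
      ∀ t : ℝ, tbar ≤ t → ∀ m ∈ Set.Icc (0:ℝ) (g 1), N t m = 0 := by
  have hh := hHbij.mapsTo
  have hg1 := g_one_mem_Ioc hgmono hgmaps hg0
  have hg1Icc : Icc 0 (g 1) ⊆ Icc (0:ℝ) 1 := Icc_subset_Icc_right hg1.2
  have hτ0ge : ∀ m ∈ Ioc (0:ℝ) (g 1), ∫ s in m..(ginv m), (V s)⁻¹ ≤ τ0 := fun m hm =>
    hτ0 ▸ le_csSup ⟨C, forall_mem_image.2 hCbound⟩ (mem_image_of_mem _ hm)
  have hexpτ0 : exp (-τ0) ≤ h (g 1) := exp_neg_le_h hHdef hg1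
    (by simpa only [hginvg 1 (right_mem_Icc.2 zero_le_one)] using hτ0ge _ (right_mem_Ioc.2 hg1.1))
  have hτ0nn : 0 ≤ τ0 :=
    neg_nonpos.1 (exp_le_one_iff.1 (hexpτ0.trans (hh (Ioc_subset_Icc_self hg1)).2))
  have hb1 : b ∈ Icc (0:ℝ) 1 := ⟨hb.1.le, hb.2.le.trans
    (hinvMaps (by simpa using mul_exp_neg_mem_Icc (right_mem_Icc.2 zero_le_one) hτu.le)).2⟩
  set ε := 1 - τ0 / τu
  have hε0 : 0 < ε := sub_pos.2 ((div_lt_one hτu).2 hτuτ0)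
  have hτ0ε : τ0 ≤ (1 - ε) * τu := by simp [ε, div_mul_cancel₀ _ hτu.ne']
  set c := h b * exp (-(ε * τb))
  have hhb : 0 < h b := hH0 ▸ hHmono (left_mem_Icc.2 zero_le_one) hb1 hb.1
  have hc : 0 < c := by positivity
  have hΩinv := isCharacteristicInvariant_expSublevelSet (ginv := ginv) hh hHmono hinvMaps hHinv
    hg1.2 (fun w hw => ginv_mem_Icc hgcont hg0 hginvg hw)
    (fun w hw => h_ginv_le_mul_exp hV.continuousOn hVpos hHdef hH0 hgcont hg0 hginvg hg1.2 hτ0ge hw)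
    hτu.le ((exp_le_exp.2 (by linarith)).trans hexpτ0) hc.le
    (sub_le_self _ (div_nonneg hτ0nn hτu.le)) hτ0ε
  have hφΩ : ∀ t ∈ Icc 0 τb, ∀ m ∈ expSublevelSet h (g 1) c ε t, φ t m = 0 := fun t ht m hm =>
    hφ0 t ht m (expSublevelSet_subset_Icc hHmono hg1.2 hb1 hhb.le hε0.le ht.2 hm)
  obtain ⟨M, hM0, hM⟩ := exists_abs_deriv_le_of_contDiffOn_Icc one_pos hV
  obtain ⟨T, hT⟩ := eventually_atTop.1
    (eventually_expSublevelSet_eq (fun m hm => (hh (hg1Icc hm)).2) hc hε0)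
  refine ⟨max T 0, le_max_right _ _, fun t ht m hm => hN.eq_zero_of_mem hτu hτb.le hβcont
    (fun u hu m hm => KF_le_exp hh hinvMaps hδpos hM hM0 hu (hg1Icc hm))
    expSublevelSet_subset hΩinv hφΩ ((le_max_right _ _).trans ht) ?_⟩
  rwa [hT t ((le_max_left _ _).trans ht)]

theorem stmt_16
    (V : ℝ → ℝ)
    (hV : ContDiffOn ℝ 1 V (Set.Icc 0 1))
    (hV0 : V 0 = 0)
    (hVpos : ∀ m ∈ Set.Ioc (0:ℝ) 1, 0 < V m)
    (hVdiv : ∀ m ∈ Set.Ioc (0:ℝ) 1,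
      ¬ IntervalIntegrable (fun s => (V s)⁻¹) MeasureTheory.volume 0 m)
    (h hinv : ℝ → ℝ)
    (hHdef : ∀ m ∈ Set.Ioc (0:ℝ) 1, h m = Real.exp (-∫ s in m..1, (V s)⁻¹))
    (hH0 : h 0 = 0)
    (hHcont : ContinuousOn h (Set.Icc 0 1))
    (hHmono : StrictMonoOn h (Set.Icc 0 1))
    (hHbij : Set.BijOn h (Set.Icc 0 1) (Set.Icc 0 1))
    (hinvH : ∀ m ∈ Set.Icc (0:ℝ) 1, hinv (h m) = m)
    (hHinv : ∀ x ∈ Set.Icc (0:ℝ) 1, h (hinv x) = x)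
    (hinvMaps : Set.MapsTo hinv (Set.Icc 0 1) (Set.Icc 0 1))
    (g ginv : ℝ → ℝ)
    (hgcont : ContinuousOn g (Set.Icc 0 1))
    (hgC1 : ContDiffOn ℝ 1 g (Set.Ico 0 1))
    (hgmono : StrictMonoOn g (Set.Icc 0 1))
    (hglt : ∀ m ∈ Set.Ioo (0:ℝ) 1, g m < m)
    (hgmaps : Set.MapsTo g (Set.Icc 0 1) (Set.Icc 0 1))
    (hg0 : g 0 = 0)
    (hginvg : ∀ m ∈ Set.Icc (0:ℝ) 1, ginv (g m) = m)
    (hgginv : ∀ x ∈ Set.Icc (0:ℝ) (g 1), g (ginv x) = x)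
    (hginvext : ∀ x : ℝ, g 1 < x → ginv x = 1)
    (δ γ : ℝ → ℝ)
    (hδcont : ContinuousOn δ (Set.Icc 0 1))
    (hδpos : ∀ m ∈ Set.Icc (0:ℝ) 1, 0 ≤ δ m)
    (hγcont : ContinuousOn γ (Set.Icc 0 1))
    (hγpos : ∀ m ∈ Set.Icc (0:ℝ) 1, 0 ≤ γ m)
    (β : ℝ → ℝ → ℝ)
    (hβcont : ContinuousOn (fun q : ℝ × ℝ => β q.1 q.2) (Set.Icc 0 (g 1) ×ˢ Set.univ))
    (hβpos : ∀ m ∈ Set.Icc (0:ℝ) (g 1), ∀ x : ℝ, 0 ≤ β m x)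
    (τu τb : ℝ) (hτu : 0 < τu) (hτb : τu < τb)
    (k : ℝ → ℝ → ℝ)
    (hkcont : ContinuousOn (fun q : ℝ × ℝ => k q.1 q.2) (Set.Icc 0 1 ×ˢ Set.Icc τu τb))
    (hkpos : ∀ m ∈ Set.Icc (0:ℝ) 1, ∀ a ∈ Set.Icc τu τb, 0 ≤ k m a)
    (hk0 : ∀ m : ℝ, g 1 ≤ m → ∀ a : ℝ, k m a = 0)
    (l : ℝ) (hl : 0 ≤ l)
    (hH1 : ∀ m ∈ Set.Icc (0:ℝ) (g 1), ∀ x₁ x₂ : ℝ, 0 ≤ x₁ → 0 ≤ x₂ →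
      |x₁ * β m x₁ - x₂ * β m x₂| ≤ l * |x₁ - x₂|)
    (C : ℝ) (hC : 0 ≤ C)
    (hCbound : ∀ m ∈ Set.Ioc (0:ℝ) (g 1), ∫ s in m..(ginv m), (V s)⁻¹ ≤ C)
    (τ0 : ℝ)
    (hτ0 : τ0 = sSup ((fun m => ∫ s in m..(ginv m), (V s)⁻¹) '' Set.Ioc 0 (g 1)))
    (hτuτ0 : τ0 < τu)
    (φ : ℝ → ℝ → ℝ)
    (hφ : ContinuousOn (fun q : ℝ × ℝ => φ q.1 q.2) (Set.Icc 0 τb ×ˢ Set.Icc 0 (g 1)))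
    (N : ℝ → ℝ → ℝ)
    (hN : IsSol V δ γ h hinv g ginv β k τu τb φ N)
    (b : ℝ) (hb : b ∈ Set.Ioo 0 (hinv (Real.exp (-τu))))
    (hφ0 : ∀ t ∈ Set.Icc (0:ℝ) τb, ∀ m ∈ Set.Icc (0:ℝ) b, φ t m = 0) :
    ∃ tbar : ℝ, 0 ≤ tbar ∧
      ∀ t : ℝ, tbar ≤ t → ∀ m ∈ Set.Icc (0:ℝ) (g 1), N t m = 0 :=
  stmt_16_general V hV hVpos h hinv hHdef hH0 hHmono hHbij hHinv hinvMaps g ginv hgcont hgmono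
    hgmaps hg0 hginvg δ γ hδpos β hβcont τu τb hτu hτb k C hCbound τ0 hτ0 hτuτ0 φ N hN b hb hφ0
end

section
/- Suppose in addition that there exists α > 0 with V(s)/(α s) → 1 as s → 0⁺ (i.e. V(s) ~ α s at 0) and that g is differentiable at 0. Then there exists C ≥ 0 such that ∫_m^{g⁻¹(m)} ds/V(s) ≤ C for all m ∈ (0,g(1)] if and only if g'(0) > 0. -/
/-!
Substituting `m = g t`, the integrals become `∫ s in g t..t, 1 / V s` for `t ∈ (0, 1]`. Since
`V s ≍ α s` near `0`, such an integral is comparable to `α⁻¹ log (t / g t)`, and `g t / t` tends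
to `g'(0)`. Hence the integrals blow up as `t → 0⁺` when `g'(0) = 0`, and stay below
`const · log (2 / g'(0))` near `0` when `g'(0) > 0`; away from `0` the integrand is bounded.
-/

open Set Filter Topology MeasureTheory intervalIntegral

lemma tendsto_div_self_of_hasDerivWithinAt {g : ℝ → ℝ} {L : ℝ} (hg0 : g 0 = 0)
    (h : HasDerivWithinAt g L (Ici 0) 0) :
    Tendsto (fun t => g t / t) (𝓝[>] 0) (𝓝 L) := by
  rw [hasDerivWithinAt_iff_tendsto_slope, Ici_sdiff_left] at h
  refine h.congr' ?_
  filter_upwards with t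
  simp [slope_def_field, hg0]

lemma eventually_le_mul_of_tendsto_div {V : ℝ → ℝ} {α c : ℝ} (hα : 0 < α) (hc : 1 < c)
    (h : Tendsto (fun s => V s / (α * s)) (𝓝[>] 0) (𝓝 1)) :
    ∀ᶠ s in 𝓝[>] 0, V s ≤ c * α * s := by
  filter_upwards [h.eventually_lt_const hc, self_mem_nhdsWithin] with s hs (hs0 : 0 < s)
  rw [div_lt_iff₀ (by positivity)] at hs
  linarith

lemma eventually_mul_le_of_tendsto_div {V : ℝ → ℝ} {α c : ℝ} (hα : 0 < α) (hc : c < 1)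
    (h : Tendsto (fun s => V s / (α * s)) (𝓝[>] 0) (𝓝 1)) :
    ∀ᶠ s in 𝓝[>] 0, c * α * s ≤ V s := by
  filter_upwards [h.eventually_const_lt hc, self_mem_nhdsWithin] with s hs (hs0 : 0 < s)
  rw [lt_div_iff₀ (by positivity)] at hs
  linarith

lemma integral_inv_const_mul {a b c : ℝ} (ha : 0 < a) (hab : a ≤ b) :
    ∫ s in a..b, (c * s)⁻¹ = c⁻¹ * Real.log (b / a) := by
  simp_rw [mul_inv]
  rw [intervalIntegral.integral_const_mul,
    integral_inv (by rw [uIcc_of_le hab]; exact fun h => (ha.trans_le h.1).false)]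

lemma intervalIntegrable_inv_const_mul {a b c : ℝ} (ha : 0 < a) (hab : a ≤ b) (hc : c ≠ 0) :
    IntervalIntegrable (fun s => (c * s)⁻¹) volume a b := by
  refine ((continuousOn_const.mul continuousOn_id).inv₀ ?_).intervalIntegrable_of_Icc hab
  exact fun s hs => mul_ne_zero hc (ha.trans_le hs.1).ne'

lemma le_integral_inv_of_le_mul {V : ℝ → ℝ} {a b c : ℝ} (ha : 0 < a) (hab : a ≤ b) (hc : 0 < c)
    (hV : ContinuousOn V (Icc a b)) (hpos : ∀ s ∈ Icc a b, 0 < V s)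
    (hle : ∀ s ∈ Icc a b, V s ≤ c * s) :
    c⁻¹ * Real.log (b / a) ≤ ∫ s in a..b, (V s)⁻¹ := by
  rw [← integral_inv_const_mul ha hab]
  exact integral_mono_on hab (intervalIntegrable_inv_const_mul ha hab hc.ne')
    ((hV.inv₀ fun s hs => (hpos s hs).ne').intervalIntegrable_of_Icc hab)
    fun s hs => inv_anti₀ (hpos s hs) (hle s hs)

lemma integral_inv_le_of_mul_le {V : ℝ → ℝ} {a b c : ℝ} (ha : 0 < a) (hab : a ≤ b) (hc : 0 < c)
    (hV : ContinuousOn V (Icc a b)) (hle : ∀ s ∈ Icc a b, c * s ≤ V s) :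
    ∫ s in a..b, (V s)⁻¹ ≤ c⁻¹ * Real.log (b / a) := by
  have hcs : ∀ s ∈ Icc a b, 0 < c * s := fun s hs => mul_pos hc (ha.trans_le hs.1)
  rw [← integral_inv_const_mul ha hab]
  exact integral_mono_on hab
    ((hV.inv₀ fun s hs => ((hcs s hs).trans_le (hle s hs)).ne').intervalIntegrable_of_Icc hab)
    (intervalIntegrable_inv_const_mul ha hab hc.ne') fun s hs => inv_anti₀ (hcs s hs) (hle s hs)

lemma exists_integral_le_of_continuousOn {f : ℝ → ℝ} {a b : ℝ} (hf : ContinuousOn f (Icc a b)) :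
    ∃ C, ∀ x ∈ Icc a b, ∀ y ∈ Icc a b, ∫ s in x..y, f s ≤ C := by
  obtain ⟨M, hM⟩ := isCompact_Icc.exists_bound_of_continuousOn hf
  refine ⟨M * (b - a), fun x hx y hy => ?_⟩
  have hM0 : 0 ≤ M := (norm_nonneg _).trans (hM x hx)
  have hyx : |y - x| ≤ b - a :=
    abs_sub_le_iff.2 ⟨by linarith [hx.1, hy.2], by linarith [hx.2, hy.1]⟩
  calc ∫ s in x..y, f s ≤ ‖∫ s in x..y, f s‖ := Real.le_norm_self _
    _ ≤ M * |y - x| :=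
        norm_integral_le_of_norm_le_const fun s hs =>
          hM s (uIcc_subset_Icc hx hy (uIoc_subset_uIcc hs))
    _ ≤ M * (b - a) := by gcongr

lemma forall_Ioc_apply_inv_iff {g ginv : ℝ → ℝ} {P : ℝ → ℝ → Prop}
    (hgcont : ContinuousOn g (Icc 0 1)) (hgmono : StrictMonoOn g (Icc 0 1)) (hg0 : g 0 = 0)
    (hginvg : ∀ t ∈ Icc 0 1, ginv (g t) = t) :
    (∀ m ∈ Ioc 0 (g 1), P m (ginv m)) ↔ ∀ t ∈ Ioc 0 1, P (g t) t := by
  have h01 : (0 : ℝ) ∈ Icc 0 1 := left_mem_Icc.2 zero_le_one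
  constructor
  · intro h t ht
    have hgt : g t ∈ Ioc 0 (g 1) :=
      ⟨hg0 ▸ hgmono h01 (Ioc_subset_Icc_self ht) ht.1,
        hgmono.monotoneOn (Ioc_subset_Icc_self ht) (right_mem_Icc.2 zero_le_one) ht.2⟩
    simpa [hginvg t (Ioc_subset_Icc_self ht)] using h (g t) hgt
  · intro h m hm
    obtain ⟨t, ht, rfl⟩ :=
      intermediate_value_Icc zero_le_one hgcont ⟨by rw [hg0]; exact hm.1.le, hm.2⟩
    have ht0 : t ≠ 0 := by rintro rfl; exact hm.1.ne' hg0
    rw [hginvg t ht]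
    exact h t ⟨lt_of_le_of_ne ht.1 (Ne.symm ht0), ht.2⟩

theorem tendsto_integral_inv_atTop_of_tendsto_div_self_zero {V g : ℝ → ℝ} {c : ℝ} (hc : 0 < c)
    (hVc : ContinuousOn V (Icc 0 1)) (hVpos : ∀ s ∈ Ioc 0 1, 0 < V s)
    (hVle : ∀ᶠ s in 𝓝[>] 0, V s ≤ c * s) (hgpos : ∀ᶠ t in 𝓝[>] 0, 0 < g t)
    (hslope : Tendsto (fun t => g t / t) (𝓝[>] 0) (𝓝 0)) :
    Tendsto (fun t => ∫ s in g t..t, (V s)⁻¹) (𝓝[>] 0) atTop := by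
  have hslope' : Tendsto (fun t => g t / t) (𝓝[>] 0) (𝓝[>] 0) := by
    refine tendsto_nhdsWithin_iff.2 ⟨hslope, ?_⟩
    filter_upwards [hgpos, self_mem_nhdsWithin] with t hgt (ht : 0 < t) using div_pos hgt ht
  have hlog : Tendsto (fun t => c⁻¹ * Real.log (g t / t)⁻¹) (𝓝[>] 0) atTop :=
    (Real.tendsto_log_atTop.comp (tendsto_inv_nhdsGT_zero.comp hslope')).const_mul_atTop
      (inv_pos.2 hc)
  obtain ⟨δ, hδ, hδV⟩ := mem_nhdsGT_iff_exists_Ioo_subset.1 (hVle.and (Ioo_mem_nhdsGT zero_lt_one))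
  refine tendsto_atTop_mono' _ ?_ hlog
  filter_upwards [hgpos, hslope.eventually_lt_const zero_lt_one, Ioo_mem_nhdsGT hδ]
    with t hgt hgt1 ht
  have hgtt : g t < t := by rwa [div_lt_one ht.1] at hgt1
  have hsub : Icc (g t) t ⊆ Ioo 0 δ := Icc_subset_Ioo hgt ht.2
  rw [inv_div]
  exact le_integral_inv_of_le_mul hgt hgtt.le hc
    (hVc.mono fun s hs => Ioo_subset_Icc_self (hδV (hsub hs)).2)
    (fun s hs => hVpos s (Ioo_subset_Ioc_self (hδV (hsub hs)).2))
    fun s hs => (hδV (hsub hs)).1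

theorem exists_integral_inv_le_of_le_div_self {V g : ℝ → ℝ} {c κ : ℝ} (hc : 0 < c)
    (hκ : 0 < κ) (hVc : ContinuousOn V (Icc 0 1)) (hVpos : ∀ s ∈ Ioc 0 1, 0 < V s)
    (hVge : ∀ᶠ s in 𝓝[>] 0, c * s ≤ V s) (hgmono : MonotoneOn g (Icc 0 1))
    (hgle : ∀ t ∈ Icc 0 1, g t ≤ t) (hslope : ∀ᶠ t in 𝓝[>] 0, κ ≤ g t / t) :
    ∃ C, ∀ t ∈ Ioc 0 1, ∫ s in g t..t, (V s)⁻¹ ≤ C := by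
  obtain ⟨δ, hδ, hδV⟩ := mem_nhdsGT_iff_exists_Ioo_subset.1
    ((hVge.and hslope).and (Ioo_mem_nhdsGT zero_lt_one))
  have hgpos : ∀ t ∈ Ioo 0 δ, 0 < g t := fun t ht =>
    (div_pos_iff_of_pos_right ht.1).1 (hκ.trans_le (hδV ht).1.2)
  have hδ2 : δ / 2 ∈ Ioo 0 δ := ⟨half_pos hδ, half_lt_self hδ⟩
  have ha := hgpos _ hδ2
  obtain ⟨C, hC⟩ := exists_integral_le_of_continuousOn
    ((hVc.mono (Icc_subset_Icc ha.le le_rfl)).inv₀ fun s hs =>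
      (hVpos s ⟨ha.trans_le hs.1, hs.2⟩).ne')
  refine ⟨max (c⁻¹ * Real.log κ⁻¹) C, fun t ht => ?_⟩
  rcases lt_or_ge t δ with htδ | hδt
  · have htδ' : t ∈ Ioo 0 δ := ⟨ht.1, htδ⟩
    have hsub : Icc (g t) t ⊆ Ioo 0 δ := Icc_subset_Ioo (hgpos t htδ') htδ
    have hratio : t / g t ≤ κ⁻¹ := by
      rw [← inv_div]
      exact inv_anti₀ hκ (hδV htδ').1.2
    calc ∫ s in g t..t, (V s)⁻¹ ≤ c⁻¹ * Real.log (t / g t) :=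
          integral_inv_le_of_mul_le (hgpos t htδ') (hgle t (Ioc_subset_Icc_self ht)) hc
            (hVc.mono fun s hs => Ioo_subset_Icc_self (hδV (hsub hs)).2)
            fun s hs => (hδV (hsub hs)).1.1
      _ ≤ c⁻¹ * Real.log κ⁻¹ := by
          gcongr
          exact div_pos ht.1 (hgpos t htδ')
      _ ≤ _ := le_max_left _ _
  · have hgtt := hgle t (Ioc_subset_Icc_self ht)
    have hgt : g (δ / 2) ≤ g t :=
      hgmono (Ioo_subset_Icc_self (hδV hδ2).2) (Ioc_subset_Icc_self ht) (hδ2.2.le.trans hδt)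
    exact (hC (g t) ⟨hgt, hgtt.trans ht.2⟩ t ⟨hgt.trans hgtt, ht.2⟩).trans (le_max_right _ _)

theorem stmt_19_general
    (V : ℝ → ℝ)
    (hV : ContDiffOn ℝ 1 V (Set.Icc 0 1))
    (hVpos : ∀ m ∈ Set.Ioc (0:ℝ) 1, 0 < V m)
    (g ginv : ℝ → ℝ)
    (hgcont : ContinuousOn g (Set.Icc 0 1))
    (hgmono : StrictMonoOn g (Set.Icc 0 1))
    (hglt : ∀ m ∈ Set.Ioo (0:ℝ) 1, g m < m)
    (hgmaps : Set.MapsTo g (Set.Icc 0 1) (Set.Icc 0 1))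
    (hg0 : g 0 = 0)
    (hginvg : ∀ m ∈ Set.Icc (0:ℝ) 1, ginv (g m) = m)
    (α : ℝ) (hα : 0 < α)
    (hVsim : Filter.Tendsto (fun s => V s / (α * s)) (nhdsWithin 0 (Set.Ioi 0)) (nhds 1))
    (hgdiff : DifferentiableWithinAt ℝ g (Set.Ici 0) 0) :
    (∃ C : ℝ, 0 ≤ C ∧
      ∀ m ∈ Set.Ioc (0:ℝ) (g 1), ∫ s in m..(ginv m), (V s)⁻¹ ≤ C) ↔
      0 < derivWithin g (Set.Ici 0) 0 := by
  set L := derivWithin g (Ici 0) 0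
  have hVc : ContinuousOn V (Icc 0 1) := hV.continuousOn
  have hslope : Tendsto (fun t => g t / t) (𝓝[>] 0) (𝓝 L) :=
    tendsto_div_self_of_hasDerivWithinAt hg0 hgdiff.hasDerivWithinAt
  have hgpos : ∀ᶠ t in 𝓝[>] 0, 0 < g t := by
    filter_upwards [Ioc_mem_nhdsGT zero_lt_one] with t ht
    exact hg0 ▸ hgmono (left_mem_Icc.2 zero_le_one) (Ioc_subset_Icc_self ht) ht.1
  have hgle : ∀ t ∈ Icc (0:ℝ) 1, g t ≤ t := by
    intro t ht
    rcases ht.1.eq_or_lt with rfl | ht0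
    · exact hg0.le
    rcases ht.2.eq_or_lt with rfl | ht1
    · exact (hgmaps ht).2
    exact (hglt t ⟨ht0, ht1⟩).le
  have hreparam : ∀ C, (∀ m ∈ Ioc 0 (g 1), ∫ s in m..ginv m, (V s)⁻¹ ≤ C) ↔
      ∀ t ∈ Ioc 0 1, ∫ s in g t..t, (V s)⁻¹ ≤ C := fun C =>
    forall_Ioc_apply_inv_iff (P := fun m t => ∫ s in m..t, (V s)⁻¹ ≤ C) hgcont hgmono hg0 hginvg
  simp only [hreparam]
  constructor
  · rintro ⟨C, -, hC⟩
    by_contra! hL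
    have hL0 : L = 0 := by
      refine le_antisymm hL (ge_of_tendsto hslope ?_)
      filter_upwards [hgpos, self_mem_nhdsWithin] with t hgt (ht : 0 < t)
      exact (div_pos hgt ht).le
    rw [hL0] at hslope
    have hdiv := tendsto_integral_inv_atTop_of_tendsto_div_self_zero (mul_pos two_pos hα) hVc
      hVpos (eventually_le_mul_of_tendsto_div hα one_lt_two hVsim) hgpos hslope
    obtain ⟨t, hCt, ht⟩ := ((hdiv.eventually_gt_atTop C).and (Ioc_mem_nhdsGT zero_lt_one)).exists
    exact (hC t ht).not_gt hCt
  · intro hL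
    obtain ⟨C, hC⟩ := exists_integral_inv_le_of_le_div_self (mul_pos one_half_pos hα)
      (half_pos hL) hVc hVpos (eventually_mul_le_of_tendsto_div hα one_half_lt_one hVsim)
      hgmono.monotoneOn hgle ((hslope.eventually_const_lt (half_lt_self hL)).mono fun _ => le_of_lt)
    exact ⟨max C 0, le_max_right _ _, fun t ht => (hC t ht).trans (le_max_left _ _)⟩

theorem stmt_19
    (V : ℝ → ℝ)
    (hV : ContDiffOn ℝ 1 V (Set.Icc 0 1))
    (hV0 : V 0 = 0)
    (hVpos : ∀ m ∈ Set.Ioc (0:ℝ) 1, 0 < V m)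
    (hVdiv : ∀ m ∈ Set.Ioc (0:ℝ) 1,
      ¬ IntervalIntegrable (fun s => (V s)⁻¹) MeasureTheory.volume 0 m)
    (g ginv : ℝ → ℝ)
    (hgcont : ContinuousOn g (Set.Icc 0 1))
    (hgC1 : ContDiffOn ℝ 1 g (Set.Ico 0 1))
    (hgmono : StrictMonoOn g (Set.Icc 0 1))
    (hglt : ∀ m ∈ Set.Ioo (0:ℝ) 1, g m < m)
    (hgmaps : Set.MapsTo g (Set.Icc 0 1) (Set.Icc 0 1))
    (hg0 : g 0 = 0)
    (hginvg : ∀ m ∈ Set.Icc (0:ℝ) 1, ginv (g m) = m)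
    (hgginv : ∀ x ∈ Set.Icc (0:ℝ) (g 1), g (ginv x) = x)
    (hginvext : ∀ x : ℝ, g 1 < x → ginv x = 1)
    (α : ℝ) (hα : 0 < α)
    (hVsim : Filter.Tendsto (fun s => V s / (α * s)) (nhdsWithin 0 (Set.Ioi 0)) (nhds 1))
    (hgdiff : DifferentiableWithinAt ℝ g (Set.Ici 0) 0) :
    (∃ C : ℝ, 0 ≤ C ∧
      ∀ m ∈ Set.Ioc (0:ℝ) (g 1), ∫ s in m..(ginv m), (V s)⁻¹ ≤ C) ↔
      0 < derivWithin g (Set.Ici 0) 0 :=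
  stmt_19_general V hV hVpos g ginv hgcont hgmono hglt hgmaps hg0 hginvg α hα hVsim hgdiff
end
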